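/- arXiv:2008.04754 — 7 statements merged into one kernel-verified Lean document; each statement's English description precedes it below -/
import Mathlib

section
/- Let f(z) = \sum_{k=0}^\infty a_k z^k, with a_k > 0 for all k, be an entire function belonging to the Laguerre–Pólya class of type I; that is, suppose f(z) = c e^{\beta z} \prod_{k} (1 + z/x_k) for some c > 0, \beta \ge 0, and positive reals x_k with \sum_k 1/x_k < \infty (the product possibly finite or empty). Then q_3(f)\,(q_2(f) - 4) + 3 \ge 0. In particular, if q_3(f) \ge q_2(f), then q_2(f) \ge 3. -/
/-- The second quotients of Taylor coefficients: `q n = a_{n-1}^2 / (a_{n-2} a_n)`. -/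
noncomputable def secondQuotient (a : ℕ → ℝ) (n : ℕ) : ℝ := (a (n - 1)) ^ 2 / (a (n - 2) * a n)

lemma abs_log_one_add_le' {w : ℝ} (h : -(1/2) ≤ w) : |Real.log (1+w)| ≤ 2*|w| := by
  have h2 : (0:ℝ) < 1 + w := by linarith
  rw [abs_le]
  constructor
  · have h3 := Real.one_sub_inv_le_log_of_pos h2
    have h4 : 1 - (1+w)⁻¹ = w/(1+w) := by field_simp; ring
    rw [h4] at h3
    have h5 : -(2*|w|) ≤ w/(1+w) := by
      rw [le_div_iff₀ h2]
      rcases abs_cases w with ⟨he, _⟩ | ⟨he, _⟩ <;> nlinarith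
    linarith
  · have h6 := Real.log_le_sub_one_of_pos h2
    have h7 := le_abs_self w
    have h8 := abs_nonneg w
    linarith

lemma aux_summable {a : ℕ → ℝ} (ha : ∀ k, 0 ≤ a k)
    (hsa : ∀ r : ℝ, Summable (fun k => a k * r^k)) {δ : ℝ} (hδ0 : 0 < δ) (hδ1 : δ ≤ 1) (m : ℕ) :
    Summable (fun k : ℕ => a k * ((k:ℝ)^m * δ^(k-m))) := by
  refine Summable.of_nonneg_of_le
    (fun k => mul_nonneg (ha k) (by positivity)) (fun k => ?_)
    ((hsa (2^m*δ)).mul_left ((δ⁻¹)^m))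
  have h1 : ((k:ℝ))^m ≤ ((2:ℝ)^m)^k := by
    have hk2 : (k:ℝ) ≤ 2^k := by exact_mod_cast (Nat.lt_two_pow_self (n := k)).le
    calc ((k:ℝ))^m ≤ ((2:ℝ)^k)^m := pow_le_pow_left₀ (Nat.cast_nonneg k) hk2 m
      _ = ((2:ℝ)^m)^k := by rw [← pow_mul, ← pow_mul, Nat.mul_comm]
  have h2 : δ^(k-m) * δ^m ≤ δ^k := by
    rw [← pow_add]
    exact pow_le_pow_of_le_one hδ0.le hδ1 (by omega)
  have hδm : (0:ℝ) < δ^m := pow_pos hδ0 m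
  have h3 : δ^(k-m) ≤ δ^k * (δ⁻¹)^m := by
    calc δ^(k-m) = δ^(k-m)*δ^m*(δ⁻¹)^m := by
          rw [mul_assoc, ← mul_pow, mul_inv_cancel₀ hδ0.ne', one_pow, mul_one]
      _ ≤ δ^k * (δ⁻¹)^m := mul_le_mul_of_nonneg_right h2 (by positivity)
  calc a k * ((k:ℝ)^m * δ^(k-m))
      ≤ a k * (((2:ℝ)^m)^k * (δ^k * (δ⁻¹)^m)) := by
        refine mul_le_mul_of_nonneg_left ?_ (ha k)
        exact mul_le_mul h1 h3 (by positivity) (by positivity)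
    _ = (δ⁻¹)^m * (a k * (2^m*δ)^k) := by rw [mul_pow]; ring

set_option maxHeartbeats 2000000 in
theorem stmt2 (a : ℕ → ℝ) (f : ℂ → ℂ)
    (ha : ∀ k, 0 < a k)
    (hf : ∀ z : ℂ, HasSum (fun k : ℕ => (a k : ℂ) * z ^ k) (f z))
    (hLP : ∃ (c β : ℝ) (ι : Type) (_ : Countable ι) (x : ι → ℝ),
      0 < c ∧ 0 ≤ β ∧ (∀ i, 0 < x i) ∧ Summable (fun i => (x i)⁻¹) ∧
      (∀ z : ℂ, Multipliable (fun i => 1 + z / (x i : ℂ))) ∧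
      (∀ z : ℂ, f z = (c : ℂ) * Complex.exp ((β : ℂ) * z) * ∏' i, (1 + z / (x i : ℂ)))) :
    secondQuotient a 3 * (secondQuotient a 2 - 4) + 3 ≥ 0 ∧
      (secondQuotient a 2 ≤ secondQuotient a 3 → 3 ≤ secondQuotient a 2) := by
  obtain ⟨c, β, ι, hι, x, hc, hβ, hx, hsumx, hmult, hfeq⟩ := hLP
  -- basic setup
  set y : ι → ℝ := fun i => (x i)⁻¹ with hy_def
  have hy : ∀ i, 0 < y i := fun i => inv_pos.2 (hx i)
  have hsy : Summable y := hsumx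
  have hT0 : 0 ≤ ∑' i, y i := tsum_nonneg fun i => (hy i).le
  have hyT : ∀ i, y i ≤ ∑' i, y i := fun i => hsy.le_tsum i fun j _ => (hy j).le
  have hsy2 : Summable (fun i => y i ^ 2) := by
    refine Summable.of_nonneg_of_le (fun i => sq_nonneg _) (fun i => ?_)
      (hsy.mul_left (∑' i, y i))
    nlinarith [hy i, hyT i]
  have hsy3 : Summable (fun i => y i ^ 3) := by
    refine Summable.of_nonneg_of_le (fun i => pow_nonneg (hy i).le 3) (fun i => ?_)
      (hsy2.mul_left (∑' i, y i))
    nlinarith [hy i, hyT i, sq_nonneg (y i)]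
  have hp2 : 0 ≤ ∑' i, y i ^ 2 := tsum_nonneg fun i => sq_nonneg _
  have hp3 : 0 ≤ ∑' i, y i ^ 3 := tsum_nonneg fun i => pow_nonneg (hy i).le 3
  -- Cauchy-Schwarz : p2^2 ≤ T * p3
  have hCS : (∑' i, y i ^ 2) ^ 2 ≤ (∑' i, y i) * (∑' i, y i ^ 3) := by
    have hsq : ∀ s : Finset ι, (∑ i ∈ s, y i ^ 2) ≤ Real.sqrt ((∑' i, y i) * (∑' i, y i ^ 3)) := by
      intro s
      have h2 : (∑ i ∈ s, y i ^ 2) ^ 2 ≤ (∑ i ∈ s, y i) * (∑ i ∈ s, y i ^ 3) := by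
        have hcs := Finset.sum_mul_sq_le_sq_mul_sq s (fun i => Real.sqrt (y i))
          (fun i => Real.sqrt (y i) ^ 3)
        have e1 : ∀ i, Real.sqrt (y i) * Real.sqrt (y i) ^ 3 = y i ^ 2 := fun i => by
          rw [show Real.sqrt (y i) * Real.sqrt (y i) ^ 3 = (Real.sqrt (y i) ^ 2) ^ 2 by ring,
            Real.sq_sqrt (hy i).le]
        have e2 : ∀ i, Real.sqrt (y i) ^ 2 = y i := fun i => Real.sq_sqrt (hy i).le
        have e3 : ∀ i, (Real.sqrt (y i) ^ 3) ^ 2 = y i ^ 3 := fun i => by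
          rw [show (Real.sqrt (y i) ^ 3) ^ 2 = (Real.sqrt (y i) ^ 2) ^ 3 by ring,
            Real.sq_sqrt (hy i).le]
        simp only [e1, e2, e3] at hcs
        exact hcs
      have h3 : (∑ i ∈ s, y i) ≤ ∑' i, y i := Summable.sum_le_tsum s (fun i _ => (hy i).le) hsy
      have h4 : (∑ i ∈ s, y i ^ 3) ≤ ∑' i, y i ^ 3 :=
        Summable.sum_le_tsum s (fun i _ => pow_nonneg (hy i).le 3) hsy3
      rw [Real.le_sqrt (Finset.sum_nonneg fun i _ => sq_nonneg _) (mul_nonneg hT0 hp3)]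
      calc (∑ i ∈ s, y i ^ 2)^2 ≤ (∑ i ∈ s, y i) * (∑ i ∈ s, y i ^ 3) := h2
        _ ≤ (∑' i, y i) * (∑' i, y i ^ 3) := by
            apply mul_le_mul h3 h4 (Finset.sum_nonneg fun i _ => pow_nonneg (hy i).le 3) hT0
    have h5 : (∑' i, y i ^ 2) ≤ Real.sqrt ((∑' i, y i) * (∑' i, y i ^ 3)) :=
      Summable.tsum_le_of_sum_le hsy2 hsq
    calc (∑' i, y i ^ 2) ^ 2 ≤ Real.sqrt ((∑' i, y i) * (∑' i, y i ^ 3)) ^ 2 := by gcongr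
      _ = (∑' i, y i) * (∑' i, y i ^ 3) := Real.sq_sqrt (mul_nonneg hT0 hp3)
  -- the ball
  set δ : ℝ := (2*((∑' i, y i)+1))⁻¹ with hδ_def
  have hδ0 : 0 < δ := by rw [hδ_def]; positivity
  have hδhalf : δ * ((∑' i, y i)+1) = 1/2 := by
    rw [hδ_def]
    have h1 : (0:ℝ) < (∑' i, y i) + 1 := by linarith
    field_simp
  have hδ1 : δ ≤ 1 := by nlinarith
  set B : Set ℝ := Metric.ball (0:ℝ) δ with hB_def
  have hBo : IsOpen B := Metric.isOpen_ball
  have hBc : IsPreconnected B := (convex_ball (0:ℝ) δ).isPreconnected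
  have h0B : (0:ℝ) ∈ B := Metric.mem_ball_self hδ0
  have habs : ∀ t ∈ B, |t| < δ := by
    intro t ht; rwa [hB_def, Metric.mem_ball, dist_zero_right, Real.norm_eq_abs] at ht
  have hhalf : ∀ t ∈ B, ∀ i, (1:ℝ)/2 < 1 + t * y i := by
    intro t ht i
    have h1 : |t * y i| ≤ |t| * (∑' i, y i) := by
      rw [abs_mul, abs_of_pos (hy i)]
      exact mul_le_mul_of_nonneg_left (hyT i) (abs_nonneg t)
    have h2 : |t| * (∑' i, y i) < 1/2 := by
      have h3 : |t| * (∑' i, y i) ≤ |t| * ((∑' i, y i)+1) := by nlinarith [abs_nonneg t]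
      have h4 : |t| * ((∑' i, y i)+1) < δ * ((∑' i, y i)+1) := by
        have := habs t ht; nlinarith
      linarith
    nlinarith [neg_abs_le (t * y i)]
  have hpos : ∀ t ∈ B, ∀ i, (0:ℝ) < 1 + t * y i := fun t ht i => by linarith [hhalf t ht i]
  have hne : ∀ t ∈ B, ∀ i, (1:ℝ) + t * y i ≠ 0 := fun t ht i => (hpos t ht i).ne'
  -- inner derivative
  have hin : ∀ (i : ι) (s : ℝ), HasDerivAt (fun s : ℝ => 1 + s * y i) (y i) s := by
    intro i s
    have := ((hasDerivAt_id s).mul_const (y i)).const_add (1:ℝ)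
    simpa using this
  -- derivatives of the log-sum
  have hdS : ∀ t ∈ B, HasDerivAt (fun s => ∑' i, Real.log (1 + s * y i))
      (∑' i, y i / (1 + t * y i)) t := by
    intro t ht
    refine hasDerivAt_tsum_of_isPreconnected (hsy.mul_left 2) hBo hBc
      (fun i s hs => (hin i s).log (hne s hs i)) (fun i s hs => ?_) h0B (by simpa using summable_zero) ht
    rw [Real.norm_eq_abs, abs_div, abs_of_pos (hy i), abs_of_pos (hpos s hs i),
      div_le_iff₀ (hpos s hs i)]
    nlinarith [hhalf s hs i, hy i]
  have hdS1 : ∀ t ∈ B, HasDerivAt (fun s => ∑' i, y i / (1 + s * y i))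
      (∑' i, -(y i ^ 2 / (1 + t * y i) ^ 2)) t := by
    intro t ht
    refine hasDerivAt_tsum_of_isPreconnected (g := fun i s => y i / (1 + s * y i))
      (g' := fun i s => -(y i ^ 2 / (1 + s * y i) ^ 2)) (hsy2.mul_left 4) hBo hBc
      (fun i s hs => ?_) (fun i s hs => ?_) h0B ?_ ht
    · have h := (hasDerivAt_const s (y i)).div (hin i s) (hne s hs i)
      refine h.congr_deriv ?_
      ring
    · have hq := hhalf s hs i
      rw [Real.norm_eq_abs, abs_neg, abs_div, abs_of_nonneg (sq_nonneg (y i)),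
        abs_of_nonneg (sq_nonneg _), div_le_iff₀ (pow_pos (hpos s hs i) 2)]
      have h4 : (1/2:ℝ)*(1/2) ≤ (1+s*y i)^2 := by nlinarith
      nlinarith [h4, sq_nonneg (y i), mul_le_mul_of_nonneg_left h4 (sq_nonneg (y i))]
    · simpa using hsy
  have hdS2 : ∀ t ∈ B, HasDerivAt (fun s => ∑' i, -(y i ^ 2 / (1 + s * y i) ^ 2))
      (∑' i, 2 * y i ^ 3 / (1 + t * y i) ^ 3) t := by
    intro t ht
    refine hasDerivAt_tsum_of_isPreconnected
      (g := fun i s => -(y i ^ 2 / (1 + s * y i) ^ 2))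
      (g' := fun i s => 2 * y i ^ 3 / (1 + s * y i) ^ 3) (hsy3.mul_left 16) hBo hBc
      (fun i s hs => ?_) (fun i s hs => ?_) h0B ?_ ht
    · have h := ((hasDerivAt_const s (y i ^ 2)).div ((hin i s).pow 2)
        (pow_ne_zero 2 (hne s hs i))).neg
      refine h.congr_deriv ?_
      have hz := hne s hs i
      simp only [Pi.pow_apply]
      field_simp
      ring
    · have hq := hhalf s hs i
      have h8 : (1/2:ℝ)^3 ≤ (1 + s*y i)^3 := by
        apply pow_le_pow_left₀ (by norm_num) hq.le
      rw [Real.norm_eq_abs, abs_div,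
        abs_of_nonneg (mul_nonneg (by norm_num : (0:ℝ) ≤ 2) (pow_nonneg (hy i).le 3)),
        abs_of_nonneg (pow_nonneg (hpos s hs i).le 3), div_le_iff₀ (pow_pos (hpos s hs i) 3)]
      nlinarith [pow_pos (hy i) 3, mul_le_mul_of_nonneg_left h8 (pow_nonneg (hy i).le 3)]
    · simpa using hsy2.neg
  -- the power series side: real sums
  have hfre : ∀ t : ℝ, HasSum (fun k => a k * t ^ k) ((f t).re) := by
    intro t
    have h := hf (t:ℂ)
    have he : (fun k : ℕ => (a k:ℂ) * (t:ℂ) ^ k) = fun k => ((a k * t ^ k : ℝ) : ℂ) := by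
      funext k; push_cast; ring
    rw [he] at h
    have h2 := h.mapL Complex.reCLM
    simp only [Complex.reCLM_apply, Complex.ofReal_re] at h2
    exact h2
  have hsa : ∀ r : ℝ, Summable (fun k => a k * r ^ k) := fun r => (hfre r).summable
  -- summable majorants for derivatives of the power series
  have hv1 : Summable (fun k : ℕ => a k * ((k:ℝ) * δ ^ (k-1))) := by
    refine Summable.of_nonneg_of_le
      (fun k => mul_nonneg (ha k).le (by positivity)) (fun k => ?_)
      (aux_summable (fun k => (ha k).le) hsa hδ0 hδ1 1)
    apply mul_le_mul_of_nonneg_left _ (ha k).le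
    rw [pow_one]
  have hv2 : Summable (fun k : ℕ => a k * ((k:ℝ) * (((k-1:ℕ):ℝ) * δ ^ (k-1-1)))) := by
    refine Summable.of_nonneg_of_le
      (fun k => mul_nonneg (ha k).le (by positivity)) (fun k => ?_)
      (aux_summable (fun k => (ha k).le) hsa hδ0 hδ1 2)
    apply mul_le_mul_of_nonneg_left _ (ha k).le
    have hsub : k - 1 - 1 = k - 2 := by omega
    rw [hsub]
    calc (k:ℝ) * (((k-1:ℕ):ℝ) * δ ^ (k-2)) ≤ (k:ℝ) * ((k:ℝ) * δ ^ (k-2)) := by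
          have : ((k-1:ℕ):ℝ) ≤ (k:ℝ) := by exact_mod_cast Nat.sub_le k 1
          have hd := pow_pos hδ0 (k-2)
          exact mul_le_mul_of_nonneg_left (mul_le_mul_of_nonneg_right this hd.le)
            (Nat.cast_nonneg k)
      _ = (k:ℝ)^2 * δ^(k-2) := by ring
  have hv3 : Summable (fun k : ℕ => a k * ((k:ℝ) * (((k-1:ℕ):ℝ) *
      (((k-1-1:ℕ):ℝ) * δ ^ (k-1-1-1))))) := by
    refine Summable.of_nonneg_of_le
      (fun k => mul_nonneg (ha k).le (by positivity)) (fun k => ?_)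
      (aux_summable (fun k => (ha k).le) hsa hδ0 hδ1 3)
    apply mul_le_mul_of_nonneg_left _ (ha k).le
    have hsub : k - 1 - 1 - 1 = k - 3 := by omega
    rw [hsub]
    have h1 : ((k-1:ℕ):ℝ) ≤ (k:ℝ) := by exact_mod_cast Nat.sub_le k 1
    have h2 : ((k-1-1:ℕ):ℝ) ≤ (k:ℝ) := by
      have : k - 1 - 1 ≤ k := by omega
      exact_mod_cast this
    have h3 : (0:ℝ) ≤ ((k-1:ℕ):ℝ) := Nat.cast_nonneg _
    have h4 : (0:ℝ) ≤ ((k-1-1:ℕ):ℝ) := Nat.cast_nonneg _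
    have hd := (pow_pos hδ0 (k-3)).le
    have hk0 : (0:ℝ) ≤ (k:ℝ) := Nat.cast_nonneg _
    calc (k:ℝ) * (((k-1:ℕ):ℝ) * (((k-1-1:ℕ):ℝ) * δ ^ (k-3)))
        ≤ (k:ℝ) * ((k:ℝ) * ((k:ℝ) * δ ^ (k-3))) := by
          apply mul_le_mul_of_nonneg_left _ hk0
          apply mul_le_mul h1 (mul_le_mul_of_nonneg_right h2 hd) (by positivity) hk0
      _ = (k:ℝ)^3 * δ^(k-3) := by ring
  -- derivatives of the power series
  have hbound1 : ∀ (k : ℕ), ∀ s ∈ B, ‖a k * ((k:ℝ) * s ^ (k-1))‖ ≤ a k * ((k:ℝ) * δ ^ (k-1)) := by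
    intro k s hs
    rw [Real.norm_eq_abs, abs_mul, abs_mul, abs_pow, abs_of_pos (ha k), Nat.abs_cast]
    apply mul_le_mul_of_nonneg_left _ (ha k).le
    apply mul_le_mul_of_nonneg_left _ (Nat.cast_nonneg k)
    exact pow_le_pow_left₀ (abs_nonneg s) (habs s hs).le _
  have hbound2 : ∀ (k : ℕ), ∀ s ∈ B, ‖a k * ((k:ℝ) * (((k-1:ℕ):ℝ) * s ^ (k-1-1)))‖ ≤
      a k * ((k:ℝ) * (((k-1:ℕ):ℝ) * δ ^ (k-1-1))) := by
    intro k s hs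
    rw [Real.norm_eq_abs, abs_mul, abs_mul, abs_mul, abs_pow, abs_of_pos (ha k),
      Nat.abs_cast, Nat.abs_cast]
    apply mul_le_mul_of_nonneg_left _ (ha k).le
    apply mul_le_mul_of_nonneg_left _ (Nat.cast_nonneg k)
    apply mul_le_mul_of_nonneg_left _ (Nat.cast_nonneg _)
    exact pow_le_pow_left₀ (abs_nonneg s) (habs s hs).le _
  have hbound3 : ∀ (k : ℕ), ∀ s ∈ B, ‖a k * ((k:ℝ) * (((k-1:ℕ):ℝ) *
      (((k-1-1:ℕ):ℝ) * s ^ (k-1-1-1))))‖ ≤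
      a k * ((k:ℝ) * (((k-1:ℕ):ℝ) * (((k-1-1:ℕ):ℝ) * δ ^ (k-1-1-1)))) := by
    intro k s hs
    rw [Real.norm_eq_abs, abs_mul, abs_mul, abs_mul, abs_mul, abs_pow, abs_of_pos (ha k),
      Nat.abs_cast, Nat.abs_cast, Nat.abs_cast]
    apply mul_le_mul_of_nonneg_left _ (ha k).le
    apply mul_le_mul_of_nonneg_left _ (Nat.cast_nonneg k)
    apply mul_le_mul_of_nonneg_left _ (Nat.cast_nonneg _)
    apply mul_le_mul_of_nonneg_left _ (Nat.cast_nonneg _)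
    exact pow_le_pow_left₀ (abs_nonneg s) (habs s hs).le _
  have hU0d : ∀ t ∈ B, HasDerivAt (fun s : ℝ => ∑' k, a k * s ^ k)
      (∑' k, a k * ((k:ℝ) * t ^ (k-1))) t := by
    intro t ht
    refine hasDerivAt_tsum_of_isPreconnected hv1 hBo hBc
      (fun k s _ => (hasDerivAt_pow k s).const_mul (a k)) (fun k s hs => hbound1 k s hs)
      h0B (hsa 0) ht
  have hU1d : ∀ t ∈ B, HasDerivAt (fun s : ℝ => ∑' k, a k * ((k:ℝ) * s ^ (k-1)))
      (∑' k, a k * ((k:ℝ) * (((k-1:ℕ):ℝ) * t ^ (k-1-1)))) t := by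
    intro t ht
    refine hasDerivAt_tsum_of_isPreconnected hv2 hBo hBc
      (fun k s _ => ((hasDerivAt_pow (k-1) s).const_mul ((k:ℝ))).const_mul (a k))
      (fun k s hs => hbound2 k s hs) h0B ?_ ht
    refine Summable.of_nonneg_of_le
      (fun k => mul_nonneg (ha k).le (mul_nonneg (Nat.cast_nonneg k) (by positivity)))
      (fun k => ?_) hv1
    apply mul_le_mul_of_nonneg_left _ (ha k).le
    apply mul_le_mul_of_nonneg_left _ (Nat.cast_nonneg k)
    exact pow_le_pow_left₀ le_rfl hδ0.le _
  have hU2d : ∀ t ∈ B, HasDerivAt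
      (fun s : ℝ => ∑' k, a k * ((k:ℝ) * (((k-1:ℕ):ℝ) * s ^ (k-1-1))))
      (∑' k, a k * ((k:ℝ) * (((k-1:ℕ):ℝ) * (((k-1-1:ℕ):ℝ) * t ^ (k-1-1-1))))) t := by
    intro t ht
    refine hasDerivAt_tsum_of_isPreconnected hv3 hBo hBc
      (fun k s _ => (((hasDerivAt_pow (k-1-1) s).const_mul (((k-1:ℕ):ℝ))).const_mul
        ((k:ℝ))).const_mul (a k))
      (fun k s hs => hbound3 k s hs) h0B ?_ ht
    refine Summable.of_nonneg_of_le
      (fun k => mul_nonneg (ha k).le (mul_nonneg (Nat.cast_nonneg k)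
        (mul_nonneg (Nat.cast_nonneg _) (by positivity))))
      (fun k => ?_) hv2
    apply mul_le_mul_of_nonneg_left _ (ha k).le
    apply mul_le_mul_of_nonneg_left _ (Nat.cast_nonneg k)
    apply mul_le_mul_of_nonneg_left _ (Nat.cast_nonneg _)
    exact pow_le_pow_left₀ le_rfl hδ0.le _
  -- the product side equals a real exponential on B
  have hlogR : ∀ t ∈ B, Summable (fun i => Real.log (1 + t * y i)) := by
    intro t ht
    apply Summable.of_abs
    refine Summable.of_nonneg_of_le (fun i => abs_nonneg _) (fun i => ?_)
      (hsy.mul_left (2*δ))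
    have h1 : -(1/2:ℝ) ≤ t * y i := by nlinarith [hhalf t ht i]
    have h2 := abs_log_one_add_le' h1
    have h3 : |t * y i| ≤ δ * y i := by
      rw [abs_mul, abs_of_pos (hy i)]
      exact mul_le_mul_of_nonneg_right (habs t ht).le (hy i).le
    calc |Real.log (1 + t*y i)| ≤ 2 * |t * y i| := h2
      _ ≤ 2 * (δ * y i) := by linarith
      _ = 2*δ * y i := by ring
  have hfG : ∀ t ∈ B, f (t:ℂ) =
      ((c * Real.exp (β * t + ∑' i, Real.log (1 + t * y i)) : ℝ) : ℂ) := by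
    intro t ht
    have hlogC : Summable (fun i => Complex.log ((1 + t * y i : ℝ) : ℂ)) := by
      have he : (fun i => Complex.log ((1 + t * y i : ℝ):ℂ))
          = fun i => ((Real.log (1 + t * y i) : ℝ) : ℂ) := by
        funext i
        rw [← Complex.ofReal_log (hpos t ht i).le]
      rw [he]
      exact Complex.summable_ofReal.2 (hlogR t ht)
    have hprod := Complex.cexp_tsum_eq_tprod (f := fun i => ((1 + t * y i : ℝ):ℂ))
      (fun i => Complex.ofReal_ne_zero.2 (hne t ht i)) hlogC
    have hev := hprod
    beta_reduce at hev
    have hsumlog : (∑' i, Complex.log ((1 + t * y i : ℝ):ℂ))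
        = (((∑' i, Real.log (1 + t * y i)) : ℝ) : ℂ) := by
      rw [Complex.ofReal_tsum]
      exact tsum_congr fun i => (Complex.ofReal_log (hpos t ht i).le).symm
    rw [hsumlog] at hev
    have hxprod : (fun i => 1 + (t:ℂ) / (x i : ℂ)) = fun i => ((1 + t * y i : ℝ):ℂ) := by
      funext i
      rw [hy_def]
      push_cast
      rw [div_eq_mul_inv]
    rw [hfeq (t:ℂ), hxprod, ← hev, mul_assoc, ← Complex.exp_add]
    push_cast
    ring_nf
  -- equality of the two functions on B
  have hEqOn : Set.EqOn (fun s : ℝ => ∑' k, a k * s ^ k)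
      (fun s : ℝ => c * Real.exp (β * s + ∑' i, Real.log (1 + s * y i))) B := by
    intro t ht
    have h1 := (hfre t).tsum_eq
    simp only []
    rw [h1, hfG t ht, Complex.ofReal_re]
  -- derivative of the G side
  have hβd : ∀ t : ℝ, HasDerivAt (fun s : ℝ => β * s) β t := by
    intro t
    simpa using (hasDerivAt_id t).const_mul β
  have hGd : ∀ t ∈ B, HasDerivAt
      (fun s : ℝ => c * Real.exp (β * s + ∑' i, Real.log (1 + s * y i)))
      ((c * Real.exp (β * t + ∑' i, Real.log (1 + t * y i))) *
        (β + ∑' i, y i / (1 + t * y i))) t := by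
    intro t ht
    have h1 : HasDerivAt (fun s : ℝ => β * s + ∑' i, Real.log (1 + s * y i))
        (β + ∑' i, y i / (1 + t * y i)) t := (hβd t).add (hdS t ht)
    have h2 := h1.exp.const_mul c
    refine h2.congr_deriv ?_
    ring
  -- transfer derivatives by uniqueness
  have hev0 : ∀ t ∈ B, (fun s : ℝ => ∑' k, a k * s ^ k) =ᶠ[nhds t]
      (fun s : ℝ => c * Real.exp (β * s + ∑' i, Real.log (1 + s * y i))) :=
    fun t ht => Filter.eventuallyEq_of_mem (hBo.mem_nhds ht) hEqOn
  have hL1 : ∀ t ∈ B, (∑' k, a k * ((k:ℝ) * t ^ (k-1))) =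
      (c * Real.exp (β * t + ∑' i, Real.log (1 + t * y i))) *
        (β + ∑' i, y i / (1 + t * y i)) :=
    fun t ht => (hU0d t ht).unique ((hGd t ht).congr_of_eventuallyEq (hev0 t ht))
  have hG1d : ∀ t ∈ B, HasDerivAt
      (fun s : ℝ => (c * Real.exp (β * s + ∑' i, Real.log (1 + s * y i))) *
        (β + ∑' i, y i / (1 + s * y i)))
      ((c * Real.exp (β * t + ∑' i, Real.log (1 + t * y i))) *
          (β + ∑' i, y i / (1 + t * y i)) * (β + ∑' i, y i / (1 + t * y i)) +
        (c * Real.exp (β * t + ∑' i, Real.log (1 + t * y i))) *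
          (∑' i, -(y i ^ 2 / (1 + t * y i) ^ 2))) t := by
    intro t ht
    exact (hGd t ht).mul ((hdS1 t ht).const_add β)
  have hev1 : ∀ t ∈ B, (fun s : ℝ => ∑' k, a k * ((k:ℝ) * s ^ (k-1))) =ᶠ[nhds t]
      (fun s : ℝ => (c * Real.exp (β * s + ∑' i, Real.log (1 + s * y i))) *
        (β + ∑' i, y i / (1 + s * y i))) :=
    fun t ht => Filter.eventuallyEq_of_mem (hBo.mem_nhds ht) (fun s hs => hL1 s hs)
  have hL2 : ∀ t ∈ B, (∑' k, a k * ((k:ℝ) * (((k-1:ℕ):ℝ) * t ^ (k-1-1)))) =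
      (c * Real.exp (β * t + ∑' i, Real.log (1 + t * y i))) *
          (β + ∑' i, y i / (1 + t * y i)) * (β + ∑' i, y i / (1 + t * y i)) +
        (c * Real.exp (β * t + ∑' i, Real.log (1 + t * y i))) *
          (∑' i, -(y i ^ 2 / (1 + t * y i) ^ 2)) :=
    fun t ht => (hU1d t ht).unique ((hG1d t ht).congr_of_eventuallyEq (hev1 t ht))
  have hG2d : HasDerivAt
      (fun s : ℝ => (c * Real.exp (β * s + ∑' i, Real.log (1 + s * y i))) *
          (β + ∑' i, y i / (1 + s * y i)) * (β + ∑' i, y i / (1 + s * y i)) +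
        (c * Real.exp (β * s + ∑' i, Real.log (1 + s * y i))) *
          (∑' i, -(y i ^ 2 / (1 + s * y i) ^ 2)))
      ((((c * Real.exp (β * 0 + ∑' i, Real.log (1 + 0 * y i))) *
          (β + ∑' i, y i / (1 + 0 * y i)) * (β + ∑' i, y i / (1 + 0 * y i)) +
        (c * Real.exp (β * 0 + ∑' i, Real.log (1 + 0 * y i))) *
          (∑' i, -(y i ^ 2 / (1 + 0 * y i) ^ 2))) * (β + ∑' i, y i / (1 + 0 * y i)) +
        ((c * Real.exp (β * 0 + ∑' i, Real.log (1 + 0 * y i))) *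
          (β + ∑' i, y i / (1 + 0 * y i))) * (∑' i, -(y i ^ 2 / (1 + 0 * y i) ^ 2))) +
       (((c * Real.exp (β * 0 + ∑' i, Real.log (1 + 0 * y i))) *
          (β + ∑' i, y i / (1 + 0 * y i))) * (∑' i, -(y i ^ 2 / (1 + 0 * y i) ^ 2)) +
        (c * Real.exp (β * 0 + ∑' i, Real.log (1 + 0 * y i))) *
          (∑' i, 2 * y i ^ 3 / (1 + 0 * y i) ^ 3))) 0 := by
    have hW : HasDerivAt (fun s : ℝ => β + ∑' i, y i / (1 + s * y i))
        (∑' i, -(y i ^ 2 / (1 + 0 * y i) ^ 2)) 0 := (hdS1 0 h0B).const_add β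
    exact (((hGd 0 h0B).mul hW).mul hW).add ((hGd 0 h0B).mul (hdS2 0 h0B))
  have hev2 : (fun s : ℝ => ∑' k, a k * ((k:ℝ) * (((k-1:ℕ):ℝ) * s ^ (k-1-1)))) =ᶠ[nhds 0]
      (fun s : ℝ => (c * Real.exp (β * s + ∑' i, Real.log (1 + s * y i))) *
          (β + ∑' i, y i / (1 + s * y i)) * (β + ∑' i, y i / (1 + s * y i)) +
        (c * Real.exp (β * s + ∑' i, Real.log (1 + s * y i))) *
          (∑' i, -(y i ^ 2 / (1 + s * y i) ^ 2))) :=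
    Filter.eventuallyEq_of_mem (hBo.mem_nhds h0B) (fun s hs => hL2 s hs)
  have hL3 := (hU2d 0 h0B).unique (hG2d.congr_of_eventuallyEq hev2)
  -- evaluate the power series sums at 0
  have hU0_0 : (∑' k, a k * (0:ℝ) ^ k) = a 0 := by
    rw [tsum_eq_single 0 (fun k hk => by simp [zero_pow hk])]
    simp
  have hU1_0 : (∑' k, a k * ((k:ℝ) * (0:ℝ) ^ (k-1))) = a 1 := by
    rw [tsum_eq_single 1 ?_]
    · simp
    · intro k hk
      rcases k with _ | _ | n
      · simp
      · exact absurd rfl hk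
      · simp [zero_pow]
  have hU2_0 : (∑' k, a k * ((k:ℝ) * (((k-1:ℕ):ℝ) * (0:ℝ) ^ (k-1-1)))) = 2 * a 2 := by
    rw [tsum_eq_single 2 ?_]
    · norm_num
      ring
    · intro k hk
      rcases k with _ | _ | _ | n
      · simp
      · simp
      · exact absurd rfl hk
      · simp [zero_pow]
  have hU3_0 : (∑' k, a k * ((k:ℝ) * (((k-1:ℕ):ℝ) * (((k-1-1:ℕ):ℝ) * (0:ℝ) ^ (k-1-1-1)))))
      = 6 * a 3 := by
    rw [tsum_eq_single 3 ?_]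
    · norm_num
      ring
    · intro k hk
      rcases k with _ | _ | _ | _ | n
      · simp
      · simp
      · simp
      · exact absurd rfl hk
      · simp [zero_pow]
  -- coefficient identities
  have e0 : a 0 = c := by
    have h := hEqOn h0B
    simp only [] at h
    rw [hU0_0] at h
    simpa using h
  have e1 : a 1 = c * (β + ∑' i, y i) := by
    have h := hL1 0 h0B
    rw [hU1_0] at h
    simpa using h
  have e2 : 2 * a 2 = c * ((β + ∑' i, y i)^2 - ∑' i, y i ^ 2) := by
    have h := hL2 0 h0B
    rw [hU2_0] at h
    simp only [mul_zero, zero_mul, zero_add, add_zero, Real.log_one, tsum_zero,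
      Real.exp_zero, mul_one, div_one, one_pow, tsum_neg] at h
    rw [h]; ring
  have e3 : 6 * a 3 = c * ((β + ∑' i, y i)^3 - 3 * (β + ∑' i, y i) * (∑' i, y i ^ 2)
      + 2 * (∑' i, y i ^ 3)) := by
    have h := hL3
    rw [hU3_0] at h
    simp only [mul_zero, zero_mul, zero_add, add_zero, Real.log_one, tsum_zero,
      Real.exp_zero, mul_one, div_one, one_pow, tsum_neg, tsum_mul_left] at h
    rw [h]; ring
  -- final algebra
  have e2' : a 2 = c * ((β + ∑' i, y i)^2 - ∑' i, y i ^ 2) / 2 := by linarith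
  have e3' : a 3 = c * ((β + ∑' i, y i)^3 - 3 * (β + ∑' i, y i) * (∑' i, y i ^ 2)
      + 2 * (∑' i, y i ^ 3)) / 6 := by linarith
  have key : 0 ≤ a 2 * (a 1 ^ 2 - 4 * a 0 * a 2) + 3 * a 0 * a 1 * a 3 := by
    have hbr : 0 ≤ (β + ∑' i, y i) * (∑' i, y i ^ 3) - (∑' i, y i ^ 2)^2 := by
      nlinarith [mul_nonneg hβ hp3]
    calc (0:ℝ) ≤ c^3 * ((β + ∑' i, y i) * (∑' i, y i ^ 3) - (∑' i, y i ^ 2)^2) :=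
          mul_nonneg (by positivity) hbr
      _ = a 2 * (a 1 ^ 2 - 4 * a 0 * a 2) + 3 * a 0 * a 1 * a 3 := by
          rw [e0, e1, e2', e3']; ring
  have hq3 : secondQuotient a 3 = (a 2) ^ 2 / (a 1 * a 3) := rfl
  have hq2 : secondQuotient a 2 = (a 1) ^ 2 / (a 0 * a 2) := rfl
  have hAeq : secondQuotient a 3 * (secondQuotient a 2 - 4) + 3 =
      (a 2 * (a 1 ^ 2 - 4 * a 0 * a 2) + 3 * a 0 * a 1 * a 3) / (a 0 * a 1 * a 3) := by
    rw [hq3, hq2]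
    field_simp [(ha 0).ne', (ha 1).ne', (ha 2).ne', (ha 3).ne']
  have hD : 0 < a 0 * a 1 * a 3 :=
    mul_pos (mul_pos (ha 0) (ha 1)) (ha 3)
  have mainA : secondQuotient a 3 * (secondQuotient a 2 - 4) + 3 ≥ 0 := by
    rw [ge_iff_le, hAeq]
    exact div_nonneg key hD.le
  refine ⟨mainA, fun hle => ?_⟩
  have hq2ge2 : 2 ≤ secondQuotient a 2 := by
    rw [hq2, le_div_iff₀ (mul_pos (ha 0) (ha 2))]
    have hdiff : a 1 ^ 2 - 2 * (a 0 * a 2) = c^2 * ∑' i, y i ^ 2 := by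
      rw [e0, e1, e2']; ring
    nlinarith [mul_nonneg (sq_nonneg c) hp2]
  have hq3pos : 0 < secondQuotient a 3 := by
    rw [hq3]
    exact div_pos (pow_pos (ha 2) 2) (mul_pos (ha 1) (ha 3))
  nlinarith [mainA, hle, hq2ge2, hq3pos]
end

section
/- Let \varphi(z) = 1 - z + \sum_{k=2}^\infty (-1)^k z^k/(q_2^{k-1} q_3^{k-2} \cdots q_{k-1}^2 q_k) be an entire function, where the real sequence (q_n)_{n \ge 2} satisfies 3 \le q_2 \le q_3 \le q_4 \le \cdots, and suppose that for every integer j_0 \ge 2 with q_{j_0} < 4 and q_{j_0+1} \ge 4, either q_{j_0-1}/q_{j_0+1} \ge 0.525 or q_{j_0} \ge 3.4303. For each integer k \ge 2 set \rho_k := q_2 q_3 \cdots q_k \sqrt{q_{k+1}}. Then for every k \ge 2 one has (-1)^k \varphi(\rho_k) \ge 0. -/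
set_option maxHeartbeats 1600000

/-- `rho q k = q_2 q_3 ⋯ q_k √(q_{k+1})`. -/
noncomputable def rho (q : ℕ → ℝ) (k : ℕ) : ℝ :=
  (∏ i ∈ Finset.Icc 2 k, q i) * Real.sqrt (q (k + 1))

/-- The Taylor coefficients `a_k = 1 / (q_2^{k-1} q_3^{k-2} ⋯ q_k)`
(so `a_0 = a_1 = 1`, the products being empty). -/
noncomputable def coefA (q : ℕ → ℝ) (k : ℕ) : ℝ :=
  (∏ i ∈ Finset.Icc 2 k, q i ^ (k + 1 - i))⁻¹

lemma coefA_succ' (q : ℕ → ℝ) (j : ℕ) :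
    coefA q (j+1) = coefA q j * (∏ i ∈ Finset.Icc 2 (j+1), q i)⁻¹ := by
  rcases Nat.eq_zero_or_pos j with hj | hj
  · subst hj; simp [coefA]
  unfold coefA
  rw [← mul_inv]
  congr 1
  have h1 : ∀ i ∈ Finset.Icc 2 (j+1), q i ^ (j+1+1-i) = q i ^ (j+1-i) * q i := by
    intro i hi
    have hi2 := (Finset.mem_Icc.1 hi).2
    rw [← pow_succ]
    congr 1
    omega
  rw [Finset.prod_congr rfl h1, Finset.prod_mul_distrib]
  congr 1
  rw [Finset.prod_Icc_succ_top (by omega : 2 ≤ j+1)]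
  simp

private lemma core2' (s a d : ℝ) (hs1 : 463/250 ≤ s) (hs2 : s ≤ 2) (ha3 : 3 ≤ a) (haQ : a ≤ s^2)
    (hd3 : 3 ≤ d) :
    46/45 + 2*s^2*a^2*d ≤ s^3*a^2*d + s*a*d := by
  have hs0 : (0:ℝ) < s := by linarith
  have hG3 : 46/45 ≤ 27*s^3 - 54*s^2 + 9*s := by
    nlinarith [mul_nonneg (sub_nonneg.2 hs1) (sub_nonneg.2 hs2), sq_nonneg (s - 463/250), sq_nonneg (s-2)]
  have hGs : 46/45 ≤ 3*s^7 - 6*s^6 + 3*s^3 := by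
    have hp : 565/10000 ≤ s^4 - 2*s^3 + 1 := by
      nlinarith [mul_nonneg (sub_nonneg.2 hs1) (sub_nonneg.2 hs2), sq_nonneg (s - 463/250), sq_nonneg (s-2)]
    have hc : 635/100 ≤ s^3 := by nlinarith [sq_nonneg (s - 463/250)]
    nlinarith [mul_nonneg (sub_nonneg.2 hc) (sub_nonneg.2 hp)]
  have hbr : 0 ≤ a*s*(s-2) + 1 := by
    nlinarith [mul_nonneg (sub_nonneg.2 haQ) (sub_nonneg.2 hs2), sq_nonneg (s-2),
      mul_nonneg (sub_nonneg.2 hs1) (sub_nonneg.2 hs2)]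
  have hden : (0:ℝ) < s^2 - 3 := by nlinarith [sq_nonneg (s - 463/250)]
  have hGa : 46/45 ≤ 3*s*a*(a*s*(s-2)+1) := by
    by_contra hcon
    push_neg at hcon
    nlinarith [mul_nonneg (sub_nonneg.2 haQ) (sub_nonneg.2 hG3),
      mul_nonneg (sub_nonneg.2 ha3) (sub_nonneg.2 hGs),
      mul_nonneg (mul_nonneg (mul_nonneg (mul_nonneg (sub_nonneg.2 hs2) (sub_nonneg.2 ha3)) (sub_nonneg.2 haQ)) (sq_nonneg s)) hden.le,
      mul_pos hden (by linarith : (0:ℝ) < 46/45 - 3*s*a*(a*s*(s-2)+1))]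
  have hW : 0 ≤ s*a*(a*s*(s-2)+1) := by positivity
  nlinarith [mul_nonneg (sub_nonneg.2 hd3) hW]

private lemma core3' (s a d : ℝ) (h3 : 3 ≤ s^2) (h0 : 0 < s) (h2 : s ≤ 2)
    (ha3 : 3 ≤ a) (haQ : a ≤ s^2) (hd3 : 3 ≤ d) :
    2*s^2*a^2*d + 46/45 + (46/45)*a^2*d/27 ≤ s^3*a^2*d + s*a*d + s*a^2*d/4 := by
  have hs173 : 433/250 ≤ s := by nlinarith
  have hG3 : 46/45 ≤ 27*(s^3-2*s^2+s/4-46/1215)+9*s := by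
    nlinarith [mul_nonneg (sub_nonneg.2 hs173) (sub_nonneg.2 h2), sq_nonneg (s-433/250), sq_nonneg (s-2)]
  have hV : 46/45 ≤ 27*(s^3-2*s^2+s/4-46/1215)+9*s + (6*(s^3-2*s^2+s/4-46/1215)*s^2+3*s) := by
    nlinarith [mul_nonneg (sub_nonneg.2 hs173) (sub_nonneg.2 h2), sq_nonneg (s-433/250), sq_nonneg (s-2),
      mul_nonneg (mul_nonneg (sub_nonneg.2 hs173) (sub_nonneg.2 hs173)) (sub_nonneg.2 h2),
      mul_nonneg (mul_nonneg (sub_nonneg.2 hs173) (sub_nonneg.2 h2)) (sub_nonneg.2 h2)]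
  have hBs : 0 ≤ (s^3-2*s^2+s/4-46/1215)*s^2+s := by
    nlinarith [mul_nonneg (sub_nonneg.2 hs173) (sub_nonneg.2 h2), sq_nonneg (s-433/250), sq_nonneg (s-2),
      mul_nonneg (mul_nonneg (sub_nonneg.2 hs173) (sub_nonneg.2 hs173)) (sub_nonneg.2 h2)]
  have hBa : 0 ≤ (s^3-2*s^2+s/4-46/1215)*a + s := by
    rcases le_or_gt 0 (s^3-2*s^2+s/4-46/1215) with hαp | hαn
    · nlinarith [mul_nonneg hαp (by linarith : (0:ℝ) ≤ a)]
    · nlinarith [mul_nonneg (neg_nonneg.2 hαn.le) (sub_nonneg.2 haQ)]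
  have hmain : 46/45 ≤ 3*(a*((s^3-2*s^2+s/4-46/1215)*a+s)) := by
    rcases le_or_gt 0 (s^3-2*s^2+s/4-46/1215) with hαp | hαn
    · have h1 : 0 ≤ (s^3-2*s^2+s/4-46/1215)*(a+3)+s := by
        nlinarith [mul_nonneg hαp (by linarith : (0:ℝ) ≤ a+3)]
      nlinarith [mul_nonneg (sub_nonneg.2 ha3) h1]
    · have hcurv : 0 ≤ (-(s^3-2*s^2+s/4-46/1215))*(a-3)*(2*s^2-a-3) := by
        apply mul_nonneg (mul_nonneg (by linarith) (by linarith)); linarith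
      rcases le_or_gt 0 (6*(s^3-2*s^2+s/4-46/1215)*s^2+3*s) with hX | hX
      · nlinarith [mul_nonneg (sub_nonneg.2 ha3) hX, hcurv]
      · nlinarith [mul_nonneg (sub_nonneg.2 haQ) (neg_nonneg.2 hX.le),
          mul_nonneg (by nlinarith : (0:ℝ) ≤ 4 - s^2) (neg_nonneg.2 hX.le), hcurv, hV]
  have hW : 0 ≤ a*((s^3-2*s^2+s/4-46/1215)*a+s) := mul_nonneg (by linarith) hBa
  nlinarith [mul_nonneg (sub_nonneg.2 hd3) hW]

private lemma core4' (s a d : ℝ) (h3 : 3 ≤ s^2) (h0 : 0 < s) (h2 : s ≤ 2)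
    (ha3 : 3 ≤ a) (haQ : a ≤ s^2) (hd3 : 3 ≤ d) :
    2*s^2*a^2*d + 46/45 + (46/45)*a^2*d/64 ≤ s^3*a^2*d + (61/40)*(s*a*d) := by
  have hs173 : 433/250 ≤ s := by nlinarith
  have hαn : s^3-2*s^2-23/1440 < 0 := by nlinarith [mul_nonneg (sq_nonneg s) (sub_nonneg.2 h2)]
  have hBs : 0 ≤ (s^3-2*s^2-23/1440)*s^2+(61/40)*s := by
    nlinarith [mul_nonneg (sub_nonneg.2 hs173) (sub_nonneg.2 h2), sq_nonneg (s-433/250), sq_nonneg (s-2),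
      mul_nonneg (mul_nonneg (sub_nonneg.2 hs173) (sub_nonneg.2 hs173)) (sub_nonneg.2 h2)]
  have hG3 : 46/45 ≤ 27*(s^3-2*s^2-23/1440)+(549/40)*s := by
    nlinarith [mul_nonneg (sub_nonneg.2 hs173) (sub_nonneg.2 h2), sq_nonneg (s-433/250), sq_nonneg (s-2)]
  have hX7 : -7 ≤ 6*(s^3-2*s^2-23/1440)*s^2+(183/40)*s := by
    nlinarith [mul_nonneg (sub_nonneg.2 hs173) (sub_nonneg.2 h2), sq_nonneg (s-433/250), sq_nonneg (s-2),
      mul_nonneg (mul_nonneg (sub_nonneg.2 hs173) (sub_nonneg.2 hs173)) (sub_nonneg.2 h2),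
      mul_nonneg (mul_nonneg (sub_nonneg.2 hs173) (sub_nonneg.2 h2)) (sub_nonneg.2 h2)]
  have hV : 46/45 ≤ 27*(s^3-2*s^2-23/1440)+(549/40)*s - 7*(s^2-3) := by
    nlinarith [mul_nonneg (sub_nonneg.2 hs173) (sub_nonneg.2 h2), sq_nonneg (s-433/250), sq_nonneg (s-2)]
  have hBa : 0 ≤ (s^3-2*s^2-23/1440)*a + (61/40)*s := by
    nlinarith [mul_nonneg (neg_nonneg.2 hαn.le) (sub_nonneg.2 haQ)]
  have hmain : 46/45 ≤ 3*(a*((s^3-2*s^2-23/1440)*a+(61/40)*s)) := by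
    have hcurv : 0 ≤ (-(s^3-2*s^2-23/1440))*(a-3)*(2*s^2-a-3) := by
      apply mul_nonneg (mul_nonneg (by linarith) (by linarith)); linarith
    rcases le_or_gt 0 (6*(s^3-2*s^2-23/1440)*s^2+(183/40)*s) with hX | hX
    · nlinarith [mul_nonneg (sub_nonneg.2 ha3) hX, hcurv]
    · nlinarith [mul_nonneg (sub_nonneg.2 haQ) (neg_nonneg.2 hX.le),
        mul_nonneg (sub_nonneg.2 h3) (by linarith : (0:ℝ) ≤ 6*(s^3-2*s^2-23/1440)*s^2+(183/40)*s+7),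
        hcurv, hV]
  have hW : 0 ≤ a*((s^3-2*s^2-23/1440)*a+(61/40)*s) := mul_nonneg (by linarith) hBa
  nlinarith [mul_nonneg (sub_nonneg.2 hd3) hW]

private lemma key' (s Q a b c d T t1 t1' t2 t2' t3 t3' : ℝ)
    (hs0 : 0 < s) (hQ : s^2 = Q) (hQ3 : 3 ≤ Q) (ha3 : 3 ≤ a) (haQ : a ≤ Q)
    (hbQ : Q ≤ b) (hcb : b ≤ c) (hd3 : 3 ≤ d) (hda : d ≤ a)
    (hT : 0 < T)
    (h1 : s * t1 = T) (h1' : s * t1' = T)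
    (h2 : Q * a * t2 = T) (h2' : Q * b * t2' = T)
    (h3 : Q * s * a^2 * d * t3 = T) (h3' : Q * s * b^2 * c * t3' = T)
    (hstar : Q < 4 → 4 ≤ b → 21 * b ≤ 40 * a ∨ (34303:ℝ)/10000 ≤ Q) :
    0 ≤ T - t1 - t1' + t2 + t2' - (46/45) * t3 - (46/45) * t3' := by
  subst hQ
  have hb3 : 3 ≤ b := le_trans hQ3 hbQ
  have hc3 : 3 ≤ c := le_trans hb3 hcb
  have ha0 : 0 < a := by linarith
  have hb0 : 0 < b := by linarith
  have hc0 : 0 < c := by linarith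
  have hd0 : 0 < d := by linarith
  have hQ0 : (0:ℝ) < s^2 := by positivity
  have ht1 : 0 < t1 := by nlinarith
  have ht1' : 0 < t1' := by nlinarith
  have ht2 : 0 < t2 := by nlinarith [mul_pos hQ0 ha0]
  have ht2' : 0 < t2' := by nlinarith [mul_pos hQ0 hb0]
  have ht3 : 0 < t3 := by
    nlinarith [mul_pos (mul_pos (mul_pos hQ0 hs0) (mul_pos ha0 ha0)) hd0]
  have ht3' : 0 < t3' := by
    nlinarith [mul_pos (mul_pos (mul_pos hQ0 hs0) (mul_pos hb0 hb0)) hc0]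
  have e1 : t1 = s^2*a^2*d*t3 :=
    mul_left_cancel₀ (ne_of_gt hs0) (by linear_combination h1 - h3)
  have e1' : t1' = s^2*a^2*d*t3 :=
    mul_left_cancel₀ (ne_of_gt hs0) (by linear_combination h1' - h3)
  have e2 : t2 = s*a*d*t3 :=
    mul_left_cancel₀ (ne_of_gt (mul_pos hQ0 ha0) : s^2*a ≠ 0) (by linear_combination h2 - h3)
  have e2' : b*t2' = s*a^2*d*t3 :=
    mul_left_cancel₀ (ne_of_gt hQ0) (by linear_combination h2' - h3)
  have e4 : t2' = s*b*c*t3' :=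
    mul_left_cancel₀ (ne_of_gt (mul_pos hQ0 hb0) : s^2*b ≠ 0) (by linear_combination h2' - h3')
  have e3' : b^2*c*t3' = a^2*d*t3 :=
    mul_left_cancel₀ (ne_of_gt (mul_pos hQ0 hs0) : s^2*s ≠ 0) (by linear_combination h3' - h3)
  rcases le_or_gt 4 (s^2) with hQ4 | hQ4
  · -- Case 1 : Q ≥ 4
    have hs2 : 2 ≤ s := by nlinarith
    have hbb : 4 ≤ b := le_trans hQ4 hbQ
    have hcc : 4 ≤ c := le_trans hbb hcb
    have k1 : 2*t1 ≤ T := by nlinarith [mul_nonneg (sub_nonneg.2 hs2) ht1.le]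
    have k1' : 2*t1' ≤ T := by nlinarith [mul_nonneg (sub_nonneg.2 hs2) ht1'.le]
    have hsad : 18 ≤ s*a*d := by
      nlinarith [mul_nonneg (mul_nonneg (sub_nonneg.2 hs2) (sub_nonneg.2 ha3)) (sub_nonneg.2 hd3),
        mul_nonneg (sub_nonneg.2 hs2) (sub_nonneg.2 ha3),
        mul_nonneg (sub_nonneg.2 hs2) (sub_nonneg.2 hd3),
        mul_nonneg (sub_nonneg.2 ha3) (sub_nonneg.2 hd3)]
    have k2 : (46/45)*t3 ≤ t2 := by
      linarith [mul_nonneg (sub_nonneg.2 hsad) ht3.le]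
    have hsbc : 32 ≤ s*b*c := by
      nlinarith [mul_nonneg (mul_nonneg (sub_nonneg.2 hs2) (sub_nonneg.2 hbb)) (sub_nonneg.2 hcc),
        mul_nonneg (sub_nonneg.2 hs2) (sub_nonneg.2 hbb),
        mul_nonneg (sub_nonneg.2 hs2) (sub_nonneg.2 hcc),
        mul_nonneg (sub_nonneg.2 hbb) (sub_nonneg.2 hcc)]
    have k3 : (46/45)*t3' ≤ t2' := by
      linarith [mul_nonneg (sub_nonneg.2 hsbc) ht3'.le]
    linarith
  · -- Q < 4
    have hs2 : s ≤ 2 := by nlinarith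
    have hsbc : 46/45 ≤ s*b*c := by
      have hs1 : 1 ≤ s := by nlinarith
      nlinarith [mul_nonneg (mul_nonneg (sub_nonneg.2 hs1) (sub_nonneg.2 hb3)) (sub_nonneg.2 hc3),
        mul_nonneg (sub_nonneg.2 hs1) (sub_nonneg.2 hb3),
        mul_nonneg (sub_nonneg.2 hs1) (sub_nonneg.2 hc3),
        mul_nonneg (sub_nonneg.2 hb3) (sub_nonneg.2 hc3)]
    have k3 : (46/45)*t3' ≤ t2' := by
      linarith [mul_nonneg (sub_nonneg.2 hsbc) ht3'.le]
    rcases lt_or_ge b 4 with hb4 | hb4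
    · -- Case 3 : b < 4
      have m2' : s*a^2*d*t3 ≤ 4*t2' := by
        linarith [mul_nonneg (sub_nonneg.2 hb4.le) ht2'.le]
      have hbc : 27 ≤ b^2*c := by
        nlinarith [mul_nonneg (mul_nonneg (sub_nonneg.2 hb3) (sub_nonneg.2 hb3)) (sub_nonneg.2 hc3),
          mul_nonneg (sub_nonneg.2 hb3) (sub_nonneg.2 hb3),
          mul_nonneg (sub_nonneg.2 hb3) (sub_nonneg.2 hc3)]
      have m3' : 27*t3' ≤ a^2*d*t3 := by
        linarith [mul_nonneg (sub_nonneg.2 hbc) ht3'.le]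
      have hcore := core3' s a d hQ3 hs0 hs2 ha3 haQ hd3
      linarith [mul_nonneg ht3.le (sub_nonneg.2 hcore), m2', m3', h3, e1, e1', e2]
    · rcases hstar hQ4 hb4 with hab | hQ343
      · -- Case 4
        have e2a : a*t2 = s*a^2*d*t3 := by linear_combination a*e2
        have m2' : 21*t2 ≤ 40*t2' := by
          by_contra hcon
          push_neg at hcon
          linarith [mul_nonneg (sub_nonneg.2 hab) ht2.le,
            mul_pos hb0 (by linarith : 0 < 21*t2 - 40*t2'), e2a, e2']
        have hbc : 64 ≤ b^2*c := by
          nlinarith [mul_nonneg (mul_nonneg (sub_nonneg.2 hb4) (sub_nonneg.2 hb4)) (by linarith : (0:ℝ) ≤ c - 4),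
            mul_nonneg (sub_nonneg.2 hb4) (sub_nonneg.2 hb4),
            mul_nonneg (sub_nonneg.2 hb4) (by linarith : (0:ℝ) ≤ c - 4)]
        have m3' : 64*t3' ≤ a^2*d*t3 := by
          linarith [mul_nonneg (sub_nonneg.2 hbc) ht3'.le]
        have hcore := core4' s a d hQ3 hs0 hs2 ha3 haQ hd3
        linarith [mul_nonneg ht3.le (sub_nonneg.2 hcore), m2', m3', h3, e1, e1', e2]
      · -- Case 2
        have hs463 : 463/250 ≤ s := by nlinarith
        have hcore := core2' s a d hs463 hs2 ha3 haQ hd3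
        linarith [mul_nonneg ht3.le (sub_nonneg.2 hcore), k3, h3, e1, e1', e2]

theorem stmt4 (q : ℕ → ℝ) (φ : ℝ → ℝ)
    (hq2 : 3 ≤ q 2)
    (hmono : ∀ n : ℕ, 2 ≤ n → q n ≤ q (n + 1))
    (hstar : ∀ j0 : ℕ, 2 ≤ j0 → q j0 < 4 → 4 ≤ q (j0 + 1) →
      (0.525 : ℝ) ≤ q (j0 - 1) / q (j0 + 1) ∨ (3.4303 : ℝ) ≤ q j0)
    (hφ : ∀ x : ℝ, HasSum (fun k : ℕ => (-1) ^ k * coefA q k * x ^ k) (φ x)) :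
    ∀ k : ℕ, 2 ≤ k → 0 ≤ (-1) ^ k * φ (rho q k) := by
  have hq : ∀ i, 2 ≤ i → 3 ≤ q i := by
    intro i hi
    induction i, hi using Nat.le_induction with
    | base => exact hq2
    | succ n hn ih => exact le_trans ih (hmono n hn)
  have hD : ∀ m, (0:ℝ) < ∏ i ∈ Finset.Icc 2 m, q i := by
    intro m
    exact Finset.prod_pos fun i hi => lt_of_lt_of_le (by norm_num) (hq i (Finset.mem_Icc.1 hi).1)
  intro k hk
  obtain ⟨n, rfl⟩ : ∃ n, k = n + 2 := ⟨k - 2, by omega⟩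
  have hq3 : 3 ≤ q (n+3) := hq _ (by omega)
  set s := Real.sqrt (q (n+3)) with hsdef
  have hsq : s^2 = q (n+3) := Real.sq_sqrt (by linarith)
  have hs0 : 0 < s := Real.sqrt_pos.2 (by linarith)
  set ρ := rho q (n+2) with hρdef
  have hρeq : ρ = (∏ i ∈ Finset.Icc 2 (n+2), q i) * s := rfl
  have hρ0 : 0 < ρ := by rw [hρeq]; exact mul_pos (hD _) hs0
  set t : ℕ → ℝ := fun j => coefA q j * ρ^j with htdef
  have htpos : ∀ j, 0 < t j := by
    intro j
    apply mul_pos _ (pow_pos hρ0 j)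
    exact inv_pos.2 (Finset.prod_pos fun i hi => pow_pos (lt_of_lt_of_le (by norm_num) (hq i (Finset.mem_Icc.1 hi).1)) _)
  have htrec : ∀ j, t (j+1) * (∏ i ∈ Finset.Icc 2 (j+1), q i) = t j * ρ := by
    intro j
    have hne : (∏ i ∈ Finset.Icc 2 (j+1), q i) ≠ 0 := (hD (j+1)).ne'
    simp only [htdef]
    rw [coefA_succ' q j, pow_succ]
    field_simp
  have hIoc : ∀ b : ℕ, Finset.Icc 2 b = Finset.Ioc 1 b := by
    intro b; ext x; simp [Finset.mem_Icc, Finset.mem_Ioc]; omega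
  have hsplitD : ∀ jk : ℕ, n+2 ≤ jk →
      (∏ i ∈ Finset.Icc 2 jk, q i) = (∏ i ∈ Finset.Icc 2 (n+2), q i) * ∏ i ∈ Finset.Ioc (n+2) jk, q i := by
    intro jk hjk
    rw [hIoc jk, hIoc (n+2), Finset.prod_Ioc_consecutive q (by omega : 1 ≤ n+2) hjk]
  have hs46 : 46/27 ≤ s := by nlinarith
  -- tail ratio step
  have hstepR : ∀ j, n+5 ≤ j → 46 * t (j+1) ≤ t j := by
    intro j hj
    have h1 := htrec j
    rw [hsplitD (j+1) (by omega)] at h1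
    have h2 : t (j+1) * (∏ i ∈ Finset.Ioc (n+2) (j+1), q i) = t j * s := by
      apply mul_left_cancel₀ (hD (n+2)).ne'
      rw [hρeq] at h1; linear_combination h1
    have hP : (∏ i ∈ Finset.Ioc (n+2) (j+1), q i) = q (n+3) * ∏ i ∈ Finset.Ioc (n+3) (j+1), q i := by
      rw [← Finset.prod_Ioc_consecutive q (by omega : n+2 ≤ n+3) (by omega : n+3 ≤ j+1)]
      congr 1
      rw [← Finset.Icc_add_one_left_eq_Ioc]
      rw [show n+2+1 = n+3 from rfl, Finset.Icc_self, Finset.prod_singleton]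
    have hP2 : (27:ℝ) ≤ ∏ i ∈ Finset.Ioc (n+3) (j+1), q i := by
      calc (27:ℝ) = 3 ^ (3:ℕ) := by norm_num
        _ ≤ 3 ^ (j + 1 - (n+3)) := by
            apply pow_le_pow_right₀ (by norm_num)
            omega
        _ = ∏ _i ∈ Finset.Ioc (n+3) (j+1), (3:ℝ) := by
            rw [Finset.prod_const, Nat.card_Ioc]
        _ ≤ ∏ i ∈ Finset.Ioc (n+3) (j+1), q i := by
            apply Finset.prod_le_prod (fun i _ => by norm_num)
            intro i hi
            exact hq i (by have := (Finset.mem_Ioc.1 hi).1; omega)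
    have hPbig : 27 * s^2 ≤ ∏ i ∈ Finset.Ioc (n+2) (j+1), q i := by
      rw [hP, hsq]
      nlinarith [hq3, hP2]
    have htp : 0 < t (j+1) := htpos _
    nlinarith [h2, mul_nonneg htp.le (sub_nonneg.2 hPbig), mul_pos hs0 htp,
      mul_nonneg (sub_nonneg.2 hs46) (mul_pos hs0 htp).le]
  -- left ratio step
  have hstepL : ∀ m, m + 4 ≤ n+2 → 46 * t m ≤ t (m+1) := by
    intro m hm
    have h1 := htrec m
    rw [show (∏ i ∈ Finset.Icc 2 (n+2), q i)
        = (∏ i ∈ Finset.Icc 2 (m+1), q i) * ∏ i ∈ Finset.Ioc (m+1) (n+2), q i from by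
      rw [hIoc (n+2), hIoc (m+1), Finset.prod_Ioc_consecutive q (by omega : 1 ≤ m+1) (by omega : m+1 ≤ n+2)]] at hρeq
    have h2 : t (m+1) = t m * ((∏ i ∈ Finset.Ioc (m+1) (n+2), q i) * s) := by
      apply mul_right_cancel₀ (hD (m+1)).ne'
      rw [hρeq] at h1
      linear_combination h1
    have hP2 : (27:ℝ) ≤ ∏ i ∈ Finset.Ioc (m+1) (n+2), q i := by
      calc (27:ℝ) = 3 ^ (3:ℕ) := by norm_num
        _ ≤ 3 ^ (n + 2 - (m+1)) := by
            apply pow_le_pow_right₀ (by norm_num)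
            omega
        _ = ∏ _i ∈ Finset.Ioc (m+1) (n+2), (3:ℝ) := by
            rw [Finset.prod_const, Nat.card_Ioc]
        _ ≤ ∏ i ∈ Finset.Ioc (m+1) (n+2), q i := by
            apply Finset.prod_le_prod (fun i _ => by norm_num)
            intro i hi
            exact hq i (by have := (Finset.mem_Ioc.1 hi).1; omega)
    nlinarith [h2, htpos m, mul_nonneg (htpos m).le (sub_nonneg.2 hP2),
      mul_nonneg (mul_nonneg (htpos m).le (by linarith : (0:ℝ) ≤ ∏ i ∈ Finset.Ioc (m+1) (n+2), q i)) (sub_nonneg.2 hs46)]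
  -- geometric tail bound on the right
  have htailR : ∀ i, t (n+5+i) ≤ t (n+5) * (1/46)^i := by
    intro i
    induction i with
    | zero => simp
    | succ i ih =>
      have hst := hstepR (n+5+i) (by omega)
      show t (n+5+i+1) ≤ t (n+5) * (1/46)^(i+1)
      rw [pow_succ]
      nlinarith [htpos (n+5+i+1)]
  have hgeo : Summable (fun i => t (n+5) * (1/46:ℝ)^i) :=
    (summable_geometric_of_lt_one (by norm_num) (by norm_num)).mul_left _
  have hsum_t : Summable (fun i => t (n+5+i)) :=
    Summable.of_nonneg_of_le (fun i => (htpos _).le) htailR hgeo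
  have htsum : ∑' i, t (n+5+i) ≤ t (n+5) * (46/45) := by
    have h1 := Summable.tsum_le_tsum htailR hsum_t hgeo
    rw [tsum_mul_left, tsum_geometric_of_lt_one (by norm_num : (0:ℝ) ≤ 1/46) (by norm_num)] at h1
    calc ∑' i, t (n+5+i) ≤ t (n+5) * (1 - 1/46:ℝ)⁻¹ := h1
      _ = t (n+5) * (46/45) := by norm_num
  -- the alternating series
  have hgs : HasSum (fun j => (-1:ℝ)^(n+2+j) * t j) ((-1)^(n+2) * φ ρ) := by
    have h0 := (hφ ρ).mul_left ((-1:ℝ)^(n+2))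
    have he : (fun j => (-1:ℝ)^(n+2) * ((-1)^j * coefA q j * ρ^j)) = fun j => (-1:ℝ)^(n+2+j) * t j := by
      funext j
      simp only [htdef]
      rw [pow_add]
      ring
    rwa [he] at h0
  have hsplit : (-1:ℝ)^(n+2) * φ ρ
      = (∑ j ∈ Finset.range (n+5), (-1:ℝ)^(n+2+j) * t j)
        + ∑' i, (-1:ℝ)^(n+2+(i+(n+5))) * t (i+(n+5)) := by
    rw [← hgs.tsum_eq]
    exact (hgs.summable.sum_add_tsum_nat_add (n+5)).symm
  have hnorm : ∀ i, ‖(-1:ℝ)^(n+2+(i+(n+5))) * t (i+(n+5))‖ = t (n+5+i) := by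
    intro i
    rw [norm_mul, norm_pow, norm_neg, norm_one, one_pow, one_mul, Real.norm_eq_abs,
      abs_of_pos (htpos _), add_comm i (n+5)]
  have hsumnorm : Summable (fun i => ‖(-1:ℝ)^(n+2+(i+(n+5))) * t (i+(n+5))‖) :=
    Summable.congr hsum_t (fun i => (hnorm i).symm)
  have htail_ge : -(t (n+5) * (46/45)) ≤ ∑' i, (-1:ℝ)^(n+2+(i+(n+5))) * t (i+(n+5)) := by
    have h1 := norm_tsum_le_tsum_norm hsumnorm
    have h2 : ∑' i, ‖(-1:ℝ)^(n+2+(i+(n+5))) * t (i+(n+5))‖ = ∑' i, t (n+5+i) := tsum_congr hnorm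
    rw [h2, Real.norm_eq_abs] at h1
    have h3 := neg_abs_le (∑' i, (-1:ℝ)^(n+2+(i+(n+5))) * t (i+(n+5)))
    linarith
  -- finite part: last five terms
  have hfive : (∑ j ∈ Finset.range (n+5), (-1:ℝ)^(n+2+j) * t j)
      = (∑ j ∈ Finset.range n, (-1:ℝ)^(n+2+j) * t j)
        + t n - t (n+1) + t (n+2) - t (n+3) + t (n+4) := by
    rw [Finset.sum_range_succ, Finset.sum_range_succ, Finset.sum_range_succ,
      Finset.sum_range_succ, Finset.sum_range_succ]
    have s0 : (-1:ℝ)^(n+2+n) = 1 := Even.neg_one_pow ⟨n+1, by omega⟩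
    have s1 : (-1:ℝ)^(n+2+(n+1)) = -1 := Odd.neg_one_pow ⟨n+1, by omega⟩
    have s2 : (-1:ℝ)^(n+2+(n+2)) = 1 := Even.neg_one_pow ⟨n+2, by omega⟩
    have s3 : (-1:ℝ)^(n+2+(n+3)) = -1 := Odd.neg_one_pow ⟨n+2, by omega⟩
    have s4 : (-1:ℝ)^(n+2+(n+4)) = 1 := Even.neg_one_pow ⟨n+3, by omega⟩
    rw [s0, s1, s2, s3, s4]; ring
  -- exact recurrences near the top
  have hDs : ∀ m : ℕ, (∏ i ∈ Finset.Icc 2 (m+2), q i) = (∏ i ∈ Finset.Icc 2 (m+1), q i) * q (m+2) :=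
    fun m => Finset.prod_Icc_succ_top (by omega) q
  have E2 : t (n+2) = t (n+1) * s := by
    have h := htrec (n+1)
    rw [hρeq] at h
    exact mul_right_cancel₀ (hD (n+2)).ne' (by linear_combination h)
  have E1 : t (n+1) = t n * (q (n+2) * s) := by
    have h := htrec n
    rw [hρeq, hDs n] at h
    exact mul_right_cancel₀ (hD (n+1)).ne' (by linear_combination h)
  have E3 : t (n+3) * q (n+3) = t (n+2) * s := by
    have h := htrec (n+2)
    rw [hρeq, hDs (n+1)] at h
    exact mul_right_cancel₀ (hD (n+2)).ne' (by linear_combination h)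
  have E4 : t (n+4) * (q (n+3) * q (n+4)) = t (n+3) * s := by
    have h := htrec (n+3)
    rw [hρeq, hDs (n+2), hDs (n+1)] at h
    exact mul_right_cancel₀ (hD (n+2)).ne' (by linear_combination h)
  have E5 : t (n+5) * (q (n+3) * q (n+4) * q (n+5)) = t (n+4) * s := by
    have h := htrec (n+4)
    rw [hρeq, hDs (n+3), hDs (n+2), hDs (n+1)] at h
    exact mul_right_cancel₀ (hD (n+2)).ne' (by linear_combination h)
  -- key-lemma hypotheses
  have h1k : s * t (n+1) = t (n+2) := by linear_combination -E2
  have h1'k : s * t (n+3) = t (n+2) := by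
    apply mul_left_cancel₀ hs0.ne'
    linear_combination E3 + t (n+3) * hsq
  have h2k : q (n+3) * q (n+2) * t n = t (n+2) := by
    linear_combination -E2 - s * E1 - (q (n+2) * t n) * hsq
  have h2'k : q (n+3) * q (n+4) * t (n+4) = t (n+2) := by
    linear_combination E4 + h1'k
  have h3'k : q (n+3) * s * (q (n+4))^2 * q (n+5) * t (n+5) = t (n+2) := by
    linear_combination (s * q (n+4)) * E5 + (q (n+4) * t (n+4)) * hsq + h2'k
  -- star hypothesis in the form needed
  have hstar' : q (n+3) < 4 → 4 ≤ q (n+4) →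
      21 * q (n+4) ≤ 40 * q (n+2) ∨ (34303:ℝ)/10000 ≤ q (n+3) := by
    intro hlt hge
    have hb0 : (0:ℝ) < q (n+4) := lt_of_lt_of_le (by norm_num) (hq _ (by omega))
    rcases hstar (n+3) (by omega) hlt hge with h | h
    · left
      rw [le_div_iff₀ hb0] at h
      rw [show n+3-1 = n+2 from by omega] at h
      nlinarith [h]
    · right
      nlinarith [h]
  -- the left chunk: choose d, t3 according to n = 0 or n ≥ 1
  obtain ⟨d, t3v, hd3, hda, h3eq, hchunkge⟩ :
      ∃ dd t3v : ℝ, 3 ≤ dd ∧ dd ≤ q (n+2) ∧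
        (q (n+3) * s * (q (n+2))^2 * dd * t3v = t (n+2)) ∧
        (-(46/45 * t3v) ≤ ∑ j ∈ Finset.range n, (-1:ℝ)^(n+2+j) * t j) := by
    rcases Nat.eq_zero_or_pos n with hn0 | hn0
    · subst hn0
      have hq20 : (0:ℝ) < q 2 := lt_of_lt_of_le (by norm_num) hq2
      have hq30 : (0:ℝ) < q 3 := lt_of_lt_of_le (by norm_num) (hq 3 (by omega))
      refine ⟨3, t 2 / (q 3 * s * (q 2)^2 * 3), le_refl 3, hq 2 le_rfl, ?_, ?_⟩
      · show q (0+3) * s * (q (0+2))^2 * 3 * _ = t (0+2)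
        norm_num
        field_simp
      · have ht3vpos : 0 < t 2 / (q 3 * s * (q 2)^2 * 3) :=
          div_pos (htpos 2) (by positivity)
        simp only [Finset.range_zero, Finset.sum_empty]
        norm_num
        linarith
    · obtain ⟨m, rfl⟩ : ∃ m, n = m + 1 := ⟨n - 1, by omega⟩
      have hidx2 : m+1+2 = m+3 := rfl
      have hidx3 : m+1+3 = m+4 := rfl
      have E0m : t (m+1) = t m * (q (m+2) * q (m+3) * s) := by
        have h := htrec m
        rw [hρeq] at h
        rw [show (∏ i ∈ Finset.Icc 2 (m+1+2), q i)
            = (∏ i ∈ Finset.Icc 2 (m+1), q i) * q (m+2) * q (m+3) from by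
          rw [show m+1+2 = m+1+1+1 from rfl]
          rw [Finset.prod_Icc_succ_top (by omega : 2 ≤ m+1+1+1) q,
            Finset.prod_Icc_succ_top (by omega : 2 ≤ m+1+1) q]] at h
        exact mul_right_cancel₀ (hD (m+1)).ne' (by linear_combination h)
      refine ⟨q (m+2), t m, hq _ (by omega), ?_, ?_, ?_⟩
      · have := hmono (m+2) (by omega)
        rw [hidx2]
        exact this
      · rw [hidx2, hidx3] at h2k ⊢
        linear_combination h2k - (q (m+4) * q (m+3)) * E0m
      · -- chunk bound
        have htailL : ∀ i, i ≤ m → t (m-i) ≤ t m * (1/46)^i := by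
          intro i
          induction i with
          | zero => intro _; simp
          | succ i ih =>
            intro him
            have hst := hstepL (m-(i+1)) (by omega)
            rw [show m-(i+1)+1 = m-i from by omega] at hst
            have hih := ih (by omega)
            rw [pow_succ]
            nlinarith [htpos (m-(i+1))]
        have habs1 : |∑ j ∈ Finset.range (m+1), (-1:ℝ)^(m+1+2+j) * t j|
            ≤ ∑ j ∈ Finset.range (m+1), t j := by
          refine le_trans (Finset.abs_sum_le_sum_abs _ _) (le_of_eq ?_)
          apply Finset.sum_congr rfl
          intro j _
          rw [abs_mul, abs_pow, abs_neg, abs_one, one_pow, one_mul, abs_of_pos (htpos j)]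
        have hrefl : ∑ j ∈ Finset.range (m+1), t j = ∑ j ∈ Finset.range (m+1), t (m-j) := by
          rw [← Finset.sum_range_reflect (fun j => t j) (m+1)]
          apply Finset.sum_congr rfl
          intro j _
          first
          | rfl
          | (congr 1; omega)
        have hsum2 : ∑ j ∈ Finset.range (m+1), t (m-j) ≤ t m * (46/45) := by
          have hstep1 : ∑ j ∈ Finset.range (m+1), t (m-j)
              ≤ ∑ j ∈ Finset.range (m+1), t m * (1/46:ℝ)^j := by
            apply Finset.sum_le_sum
            intro j hj
            exact htailL j (by simp at hj; omega)
          have hstep2 : ∑ j ∈ Finset.range (m+1), t m * (1/46:ℝ)^j ≤ t m * (46/45) := by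
            rw [← Finset.mul_sum]
            have hgs2 : ∑ j ∈ Finset.range (m+1), (1/46:ℝ)^j ≤ (1-1/46:ℝ)⁻¹ := by
              have := Summable.sum_le_tsum (Finset.range (m+1))
                (fun i _ => pow_nonneg (by norm_num : (0:ℝ) ≤ 1/46) i)
                (summable_geometric_of_lt_one (by norm_num) (by norm_num))
              rwa [tsum_geometric_of_lt_one (by norm_num : (0:ℝ) ≤ 1/46) (by norm_num)] at this
            calc t m * ∑ j ∈ Finset.range (m+1), (1/46:ℝ)^j
                ≤ t m * (1-1/46:ℝ)⁻¹ := mul_le_mul_of_nonneg_left hgs2 (htpos m).le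
              _ = t m * (46/45) := by norm_num
          linarith
        have h4 := neg_abs_le (∑ j ∈ Finset.range (m+1), (-1:ℝ)^(m+1+2+j) * t j)
        linarith [habs1, hsum2, hrefl, h4]
  -- apply the key lemma
  have hkey := key' s (q (n+3)) (q (n+2)) (q (n+4)) (q (n+5)) d (t (n+2)) (t (n+1)) (t (n+3))
    (t n) (t (n+4)) t3v (t (n+5)) hs0 hsq hq3 (hq _ (by omega)) (hmono (n+2) (by omega))
    (hmono (n+3) (by omega)) (hmono (n+4) (by omega)) hd3 hda (htpos _)
    h1k h1'k h2k h2'k h3eq h3'k hstar'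
  rw [hsplit, hfive]
  linarith [htail_ge, hchunkge, hkey]
end

section
/- For all real numbers q and q' with 0 < q \le q', one has q q' - 2 q \sqrt{q'} + 2 > 0. -/
theorem stmt9 (q q' : ℝ) (hq : 0 < q) (hqq' : q ≤ q') :
    0 < q * q' - 2 * q * Real.sqrt q' + 2 := by
  have hq' : (0:ℝ) ≤ q' := le_trans hq.le hqq'
  set s := Real.sqrt q' with hs
  have hs0 : 0 ≤ s := Real.sqrt_nonneg _
  have hsq : s * s = q' := Real.mul_self_sqrt hq'
  rcases le_or_gt (2 * s) q' with h | h
  · nlinarith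
  · have key : q * q' - 2 * q * s ≥ q' * q' - 2 * q' * s := by nlinarith
    nlinarith [sq_nonneg (s - 3/2), sq_nonneg s, sq_nonneg (s*s - 3*s)]
end

section
/- Let q and q' be real numbers with 2\cdot 2^{1/3} \le q \le q'. Then for every \theta \in \mathbb{R}, |1 - q\sqrt{q'} e^{i\theta} + q q' e^{2i\theta} - q\sqrt{q'} e^{3i\theta} + e^{4i\theta}| \ge q q' - 2 q \sqrt{q'} + 2 > 0. In particular, the polynomial P(w) = 1 - q\sqrt{q'} w + q q' w^2 - q\sqrt{q'} w^3 + w^4 has no zeros on the unit circle |w| = 1. -/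
set_option maxHeartbeats 1000000

theorem stmt10 (q q' : ℝ) (hq : 2 * (2 : ℝ) ^ ((1 : ℝ) / 3) ≤ q) (hqq' : q ≤ q') :
    (∀ θ : ℝ,
      q * q' - 2 * q * Real.sqrt q' + 2 ≤
        ‖(1 : ℂ) - ((q * Real.sqrt q' : ℝ) : ℂ) * Complex.exp (θ * Complex.I)
          + ((q * q' : ℝ) : ℂ) * Complex.exp (2 * θ * Complex.I)
          - ((q * Real.sqrt q' : ℝ) : ℂ) * Complex.exp (3 * θ * Complex.I)
          + Complex.exp (4 * θ * Complex.I)‖) ∧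
    0 < q * q' - 2 * q * Real.sqrt q' + 2 ∧
    ∀ w : ℂ, ‖w‖ = 1 →
      (1 : ℂ) - ((q * Real.sqrt q' : ℝ) : ℂ) * w + ((q * q' : ℝ) : ℂ) * w ^ 2
        - ((q * Real.sqrt q' : ℝ) : ℂ) * w ^ 3 + w ^ 4 ≠ 0 := by
  -- basic bounds
  set a := (2 : ℝ) ^ ((1 : ℝ) / 3) with ha_def
  have ha0 : (0 : ℝ) < a := Real.rpow_pos_of_pos (by norm_num) _
  have ha3 : a ^ 3 = 2 := by
    rw [ha_def, ← Real.rpow_natCast ((2:ℝ) ^ ((1:ℝ)/3)) 3, ← Real.rpow_mul (by norm_num)]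
    norm_num
  have ha54 : (5 : ℝ) / 4 < a := by nlinarith [sq_nonneg (a - 5/4), sq_nonneg a]
  have hq0 : (0 : ℝ) < q := by nlinarith
  have hq'0 : (0 : ℝ) < q' := lt_of_lt_of_le hq0 hqq'
  set u := Real.sqrt q' with hu_def
  have hu0 : 0 < u := Real.sqrt_pos.mpr hq'0
  have hu2 : u ^ 2 = q' := Real.sq_sqrt hq'0.le
  have hqu2 : q ≤ u ^ 2 := by rw [hu2]; exact hqq'
  set C := q * u with hC_def
  -- C ≥ 4 since C² = q² q' ≥ q³ ≥ (2a)³ = 16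
  have hC4 : 4 ≤ C := by
    have hC2 : C ^ 2 = q ^ 2 * q' := by rw [hC_def, mul_pow, hu2]
    have h16 : (16 : ℝ) ≤ C ^ 2 := by
      have hq3 : (16 : ℝ) ≤ q ^ 3 := by nlinarith [sq_nonneg a, sq_nonneg (q - 2*a)]
      nlinarith
    nlinarith [sq_nonneg (C - 4), mul_pos hq0 hu0]
  -- positivity of q q' - 2 C + 2
  have hpos : 0 < q * q' - 2 * q * u + 2 := by
    have hqq : q * q' = q * u ^ 2 := by rw [hu2]
    rw [hqq]
    -- q u² - 2 q u + 2 > 0, with q ≤ u², u ≥ a² > 25/16, q ≥ 2a > 5/2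
    have hua : a ^ 2 ≤ u := by
      have : Real.sqrt q ≤ u := Real.sqrt_le_sqrt hqq'
      have h2a : Real.sqrt (2 * a) ≤ Real.sqrt q := Real.sqrt_le_sqrt hq
      have : a ^ 2 = Real.sqrt (2 * a) := by
        rw [show 2 * a = (a ^ 2) ^ 2 by nlinarith, Real.sqrt_sq (by positivity)]
      nlinarith [Real.sqrt_le_sqrt hq, Real.sqrt_le_sqrt hqq']
    have hu54 : 25 / 16 ≤ u := by nlinarith
    have hq52 : 5 / 2 ≤ q := by nlinarith
    rcases le_or_gt 2 u with h | h
    · nlinarith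
    · nlinarith [mul_nonneg (sub_nonneg.mpr hu54) (sub_nonneg.mpr h.le),
        mul_pos hq0 hu0, sq_nonneg (u - 25/16), sq_nonneg (u - 2)]
  -- the key pointwise bound
  have key : ∀ θ : ℝ,
      q * q' - 2 * q * Real.sqrt q' + 2 ≤
        ‖(1 : ℂ) - ((q * Real.sqrt q' : ℝ) : ℂ) * Complex.exp (θ * Complex.I)
          + ((q * q' : ℝ) : ℂ) * Complex.exp (2 * θ * Complex.I)
          - ((q * Real.sqrt q' : ℝ) : ℂ) * Complex.exp (3 * θ * Complex.I)
          + Complex.exp (4 * θ * Complex.I)‖ := by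
    intro θ
    set t := Real.cos θ with ht_def
    set s := Real.sin θ with hs_def
    have hz : Complex.exp (θ * Complex.I) = (t : ℂ) + (s : ℂ) * Complex.I := by
      rw [Complex.exp_mul_I]
      simp [ht_def, hs_def]
    have h2 : Complex.exp (2 * θ * Complex.I) = Complex.exp (θ * Complex.I) ^ 2 := by
      rw [← Complex.exp_nat_mul]; ring_nf
    have h3 : Complex.exp (3 * θ * Complex.I) = Complex.exp (θ * Complex.I) ^ 3 := by
      rw [← Complex.exp_nat_mul]; ring_nf
    have h4 : Complex.exp (4 * θ * Complex.I) = Complex.exp (θ * Complex.I) ^ 4 := by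
      rw [← Complex.exp_nat_mul]; ring_nf
    have hst : (s : ℂ) ^ 2 = 1 - (t : ℂ) ^ 2 := by
      have := Real.sin_sq_add_cos_sq θ
      have : s ^ 2 = 1 - t ^ 2 := by nlinarith
      exact_mod_cast congrArg (fun x : ℝ => (x : ℂ)) this
    set r : ℝ := q * q' - 2 * (q * u) * t + (4 * t ^ 2 - 2) with hr_def
    have hfact :
        (1 : ℂ) - ((q * Real.sqrt q' : ℝ) : ℂ) * Complex.exp (θ * Complex.I)
          + ((q * q' : ℝ) : ℂ) * Complex.exp (2 * θ * Complex.I)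
          - ((q * Real.sqrt q' : ℝ) : ℂ) * Complex.exp (3 * θ * Complex.I)
          + Complex.exp (4 * θ * Complex.I)
        = (r : ℝ) * Complex.exp (θ * Complex.I) ^ 2 := by
      rw [h2, h3, h4, hz, hr_def]
      push_cast
      linear_combination
        (((s:ℂ) ^ 2 - 4 * (t:ℂ) * (s:ℂ) * Complex.I + (s:ℂ) * ((q:ℂ) * (u:ℂ)) * Complex.I
          - 3 * (t:ℂ) ^ 2 + (t:ℂ) * ((q:ℂ) * (u:ℂ)) - 1)) * hst
        + (-(↑q * ↑u * ↑t * ↑s ^ 2) - ↑q * ↑u * ↑s ^ 3 * Complex.I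
            + 4 * ↑t * ↑s ^ 3 * Complex.I + 2 * ↑t ^ 2 * ↑s ^ 2 + 2 * ↑s ^ 2
            + ↑s ^ 4 * (Complex.I ^ 2 - 1)) * Complex.I_sq
    rw [hfact]
    have hnorm : ‖((r : ℝ) : ℂ) * Complex.exp (θ * Complex.I) ^ 2‖ = |r| := by
      rw [norm_mul, norm_pow,
        Complex.norm_exp_ofReal_mul_I]
      simp
    rw [hnorm]
    have ht1 : t ≤ 1 := Real.cos_le_one θ
    have ht1' : -1 ≤ t := Real.neg_one_le_cos θ
    have hr_ge : q * q' - 2 * (q * u) + 2 ≤ r := by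
      rw [hr_def]
      nlinarith [mul_nonneg (sub_nonneg.mpr ht1) (by nlinarith : (0:ℝ) ≤ 2 * (q*u) - 4 * (1 + t))]
    calc q * q' - 2 * q * Real.sqrt q' + 2 = q * q' - 2 * (q * u) + 2 := by ring
      _ ≤ r := hr_ge
      _ ≤ |r| := le_abs_self r
  refine ⟨key, hpos, ?_⟩
  intro w hw h0
  have hw0 : w ≠ 0 := by
    intro h; rw [h] at hw; simp at hw
  obtain ⟨θ, hθ⟩ : ∃ θ : ℝ, w = Complex.exp (θ * Complex.I) := by
    refine ⟨Complex.arg w, ?_⟩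
    have := Complex.norm_mul_exp_arg_mul_I w
    rw [hw] at this
    simpa using this.symm
  have h2 : w ^ 2 = Complex.exp (2 * θ * Complex.I) := by
    rw [hθ, ← Complex.exp_nat_mul]; ring_nf
  have h3 : w ^ 3 = Complex.exp (3 * θ * Complex.I) := by
    rw [hθ, ← Complex.exp_nat_mul]; ring_nf
  have h4 : w ^ 4 = Complex.exp (4 * θ * Complex.I) := by
    rw [hθ, ← Complex.exp_nat_mul]; ring_nf
  have := key θ
  rw [← hθ, ← h2, ← h3, ← h4, h0] at this
  simp at this
  linarith
end

section
/- Let q and q' be real numbers with 2\cdot 2^{1/3} \le q \le q'. Then the quartic polynomial P(w) = 1 - q\sqrt{q'}\, w + q q'\, w^2 - q\sqrt{q'}\, w^3 + w^4 has no roots on the unit circle |w| = 1 and has exactly two roots, counted with multiplicity, in the open unit disk |w| < 1 (and hence exactly two roots in |w| > 1). -/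
lemma stmt11_keyR (A B : ℝ) (hA : 4 ≤ A) (hB : 0 < B - 2*A + 2) (s : ℂ)
    (hs : s^2 - (A:ℂ)*s + ((B:ℂ) - 2) = 0) (him : s.im = 0) (hre : |s.re| ≤ 2) : False := by
  have hσ : s = (s.re : ℂ) := Complex.ext rfl (by simp [him])
  set σ := s.re with hσdef
  rw [hσ] at hs
  have hr : σ^2 - A*σ + (B - 2) = 0 := by exact_mod_cast hs
  have h2 : σ ≤ 2 := (abs_le.mp hre).2
  have heq : (2-σ)*(σ-A+2) = B - 2*A + 2 := by linear_combination -hr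
  nlinarith [mul_nonpos_of_nonneg_of_nonpos (by linarith : (0:ℝ) ≤ 2 - σ)
    (by linarith : σ - A + 2 ≤ 0)]

lemma stmt11_pair (w w' : ℂ) (hprod : w * w' = 1)
    (hkey : (w+w').im = 0 → |(w+w').re| ≤ 2 → False) :
    ‖w‖ ≠ 1 ∧ ‖w'‖ ≠ 1 ∧ (‖w‖ < 1 ↔ ¬ ‖w'‖ < 1) ∧ (1 < ‖w‖ ↔ ¬ 1 < ‖w'‖) := by
  have hne : ∀ u v : ℂ, u * v = 1 → (u+v).im = 0 → False → True := fun _ _ _ _ _ => trivial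
  have main : ∀ u v : ℂ, u * v = 1 → ((u+v).im = 0 → |(u+v).re| ≤ 2 → False) → ‖u‖ ≠ 1 := by
    intro u v huv hk h1
    have hu0 : u ≠ 0 := by intro h0; rw [h0] at h1; simp at h1
    have hvc : v = starRingEnd ℂ u := by
      apply mul_left_cancel₀ hu0
      rw [huv, Complex.mul_conj]
      norm_cast
      rw [Complex.normSq_eq_norm_sq, h1]; norm_num
    apply hk
    · rw [hvc]; simp
    · rw [hvc]
      have : (u + starRingEnd ℂ u).re = 2 * u.re := by simp; ring
      rw [this]
      have := Complex.abs_re_le_norm u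
      rw [h1] at this
      rw [abs_mul]
      simp only [abs_two]
      nlinarith [abs_nonneg u.re]
  have hw : ‖w‖ ≠ 1 := main w w' hprod hkey
  have hw' : ‖w'‖ ≠ 1 := main w' w (by rw [mul_comm]; exact hprod)
    (by rw [add_comm]; exact hkey)
  have hn : ‖w‖ * ‖w'‖ = 1 := by rw [← norm_mul, hprod, norm_one]
  have hwpos : 0 < ‖w‖ := by
    rcases (norm_nonneg w).lt_or_eq with h | h
    · exact h
    · exfalso; rw [← h] at hn; simp at hn
  have hw'pos : 0 < ‖w'‖ := by nlinarith
  refine ⟨hw, hw', ?_, ?_⟩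
  · constructor
    · intro h hcon; nlinarith
    · intro h
      have : 1 ≤ ‖w'‖ := not_lt.mp h
      rcases this.lt_or_eq with h2 | h2
      · nlinarith
      · exact absurd h2.symm hw'
  · constructor
    · intro h hcon; nlinarith
    · intro h
      have : ‖w'‖ ≤ 1 := not_lt.mp h
      rcases this.lt_or_eq with h2 | h2
      · nlinarith
      · exact absurd h2 hw'

lemma stmt11_count {p : ℂ → Prop} [DecidablePred p] (a b c d : ℂ)
    (h1 : p a ↔ ¬ p b) (h2 : p c ↔ ¬ p d) :
    Multiset.card (Multiset.filter p {a, b, c, d}) = 2 := by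
  by_cases ha : p a <;> by_cases hc : p c
  · have hb : ¬ p b := h1.mp ha
    have hd : ¬ p d := h2.mp hc
    simp [Multiset.insert_eq_cons, Multiset.filter_cons, Multiset.filter_singleton, ha, hb, hc, hd]
  · have hb : ¬ p b := h1.mp ha
    have hd : p d := by by_contra hd; exact hc (h2.mpr hd)
    simp [Multiset.insert_eq_cons, Multiset.filter_cons, Multiset.filter_singleton, ha, hb, hc, hd]
  · have hb : p b := by by_contra hb; exact ha (h1.mpr hb)
    have hd : ¬ p d := h2.mp hc
    simp [Multiset.insert_eq_cons, Multiset.filter_cons, Multiset.filter_singleton, ha, hb, hc, hd]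
  · have hb : p b := by by_contra hb; exact ha (h1.mpr hb)
    have hd : p d := by by_contra hd; exact hc (h2.mpr hd)
    simp [Multiset.insert_eq_cons, Multiset.filter_cons, Multiset.filter_singleton, ha, hb, hc, hd]

-- real facts lemma
lemma stmt11_facts (q q' : ℝ) (hq : 2 * (2 : ℝ) ^ ((1 : ℝ) / 3) ≤ q) (hqq' : q ≤ q') :
    4 ≤ q * Real.sqrt q' ∧ 0 < q * q' - 2 * (q * Real.sqrt q') + 2 := by
  have hc0 : (0:ℝ) < (2:ℝ) ^ ((1:ℝ)/3) := Real.rpow_pos_of_pos (by norm_num) _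
  have hc : ((2:ℝ) ^ ((1:ℝ)/3)) ^ (3:ℕ) = 2 := by
    rw [← Real.rpow_natCast ((2:ℝ) ^ ((1:ℝ)/3)) 3, ← Real.rpow_mul (by norm_num)]
    norm_num
  have hq0 : 0 < q := lt_of_lt_of_le (by nlinarith) hq
  have hq'0 : 0 ≤ q' := le_trans hq0.le hqq'
  set t := Real.sqrt q' with ht
  have ht0 : 0 ≤ t := Real.sqrt_nonneg _
  have ht2 : t ^ 2 = q' := Real.sq_sqrt hq'0
  have hq16 : 16 ≤ q ^ 3 := by
    have := pow_le_pow_left₀ (by positivity) hq 3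
    nlinarith [this, hc]
  have hqt : q ≤ t ^ 2 := by rw [ht2]; exact hqq'
  have h4 : 4 ≤ q * t := by nlinarith [sq_nonneg (q*t - 4), sq_nonneg (q*t + 4), mul_pos hq0 hq0]
  constructor
  · exact h4
  · rw [← ht2]
    rcases le_total t 2 with h | h
    · nlinarith [mul_nonneg (mul_nonneg (sub_nonneg.2 hqt) ht0) (sub_nonneg.2 h),
        sq_nonneg (t - 3/2), sq_nonneg t, mul_nonneg (sq_nonneg (t - 3/2)) (sq_nonneg t),
        mul_nonneg (sq_nonneg (t-3/2)) ht0]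
    · nlinarith [mul_nonneg (mul_nonneg hq0.le ht0) (sub_nonneg.2 h)]

open Polynomial in
theorem stmt11 (q q' : ℝ) (hq : 2 * (2 : ℝ) ^ ((1 : ℝ) / 3) ≤ q) (hqq' : q ≤ q') :
    let P : Polynomial ℂ :=
      C 1 - C ((q * Real.sqrt q' : ℝ) : ℂ) * X + C ((q * q' : ℝ) : ℂ) * X ^ 2
        - C ((q * Real.sqrt q' : ℝ) : ℂ) * X ^ 3 + X ^ 4
    (∀ z ∈ P.roots, ‖z‖ ≠ 1) ∧
      (P.roots.filter (fun z => ‖z‖ < 1)).card = 2 ∧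
      (P.roots.filter (fun z => 1 < ‖z‖)).card = 2 := by
  intro P
  obtain ⟨hA, hB⟩ := stmt11_facts q q' hq hqq'
  set a : ℂ := ((q * Real.sqrt q' : ℝ) : ℂ) with ha
  set b : ℂ := ((q * q' : ℝ) : ℂ) with hb
  obtain ⟨s₁, s₂, hsum, hprod⟩ : ∃ s₁ s₂ : ℂ, s₁ + s₂ = a ∧ s₁ * s₂ = b - 2 := by
    obtain ⟨δ, hδ⟩ := IsAlgClosed.exists_pow_nat_eq (k := ℂ) (a^2 - 4*(b-2)) (n := 2)
      (by norm_num)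
    exact ⟨(a + δ)/2, (a - δ)/2, by ring, by field_simp; linear_combination -hδ⟩
  have hq1 : s₁^2 - a*s₁ + (b-2) = 0 := by linear_combination s₁ * hsum - hprod
  have hq2 : s₂^2 - a*s₂ + (b-2) = 0 := by linear_combination s₂ * hsum - hprod
  have hkey : ∀ s : ℂ, s^2 - a*s + (b-2) = 0 → (s.im = 0 → |s.re| ≤ 2 → False) := by
    intro s hs him hre
    refine stmt11_keyR (q * Real.sqrt q') (q * q') hA (by linarith) s ?_ him hre
    rw [ha, hb] at hs; exact hs
  have hpairex : ∀ s : ℂ, ∃ u v : ℂ, u + v = s ∧ u * v = 1 := by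
    intro s
    obtain ⟨ρ, hρ⟩ := IsAlgClosed.exists_pow_nat_eq (k := ℂ) (s^2 - 4) (n := 2) (by norm_num)
    exact ⟨(s + ρ)/2, (s - ρ)/2, by ring, by field_simp; linear_combination -hρ⟩
  obtain ⟨w₁, w₂, hsum1, hprod1⟩ := hpairex s₁
  obtain ⟨w₃, w₄, hsum2, hprod2⟩ := hpairex s₂
  -- factorization
  have hPfac : P = (Multiset.map (fun z => X - C z) ({w₁, w₂, w₃, w₄} : Multiset ℂ)).prod := by
    show C 1 - C a * X + C b * X ^ 2 - C a * X ^ 3 + X ^ 4 = _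
    have e1 : C a = C w₁ + C w₂ + C w₃ + C w₄ := by
      rw [← C_add, ← C_add, ← C_add]
      congr 1
      rw [← hsum]; rw [← hsum1, ← hsum2]; ring
    have e2 : C b = C ((w₁ + w₂) * (w₃ + w₄) + w₁ * w₂ + w₃ * w₄) := by
      congr 1
      rw [hsum1, hsum2, hprod1, hprod2]
      have : b = (b - 2) + 1 + 1 := by ring
      rw [this, ← hprod]
    have e0 : (C 1 : ℂ[X]) = C (w₁ * w₂ * (w₃ * w₄)) := by rw [hprod1, hprod2]; norm_num
    have e3 : C a = C (w₁ * w₂ * (w₃ + w₄) + w₃ * w₄ * (w₁ + w₂)) := by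
      congr 1
      rw [hprod1, hprod2, hsum1, hsum2, ← hsum]; ring
    rw [e0]
    nth_rewrite 1 [e3]
    rw [e2]
    nth_rewrite 1 [e1]
    simp only [Multiset.insert_eq_cons, Multiset.map_cons, Multiset.prod_cons,
      Multiset.map_singleton, Multiset.prod_singleton, map_add, map_mul]
    ring
  have hroots : P.roots = ({w₁, w₂, w₃, w₄} : Multiset ℂ) := by
    rw [hPfac, Polynomial.roots_multiset_prod_X_sub_C]
  have key1 := hkey s₁ hq1
  have key2 := hkey s₂ hq2
  rw [hsum1.symm] at key1
  rw [hsum2.symm] at key2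
  obtain ⟨h1ne, h2ne, h12lt, h12gt⟩ := stmt11_pair w₁ w₂ hprod1 key1
  obtain ⟨h3ne, h4ne, h34lt, h34gt⟩ := stmt11_pair w₃ w₄ hprod2 key2
  refine ⟨?_, ?_, ?_⟩
  · intro z hz
    rw [hroots] at hz
    simp only [Multiset.insert_eq_cons, Multiset.mem_cons, Multiset.mem_singleton] at hz
    rcases hz with rfl | rfl | rfl | rfl
    exacts [h1ne, h2ne, h3ne, h4ne]
  · rw [hroots]; exact stmt11_count w₁ w₂ w₃ w₄ h12lt h34lt
  · rw [hroots]; exact stmt11_count w₁ w₂ w₃ w₄ h12gt h34gt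
end

section
/- For every real number b > 1.47, one has b^{11} - 2 b^{10} + 2 b^7 - b^4 + 2 b^3 - 2 b^2 - 2 > 0; in particular, the greatest real root of the polynomial x^{11} - 2x^{10} + 2x^7 - x^4 + 2x^3 - 2x^2 - 2 is less than 1.47. -/
theorem stmt12 :
    (∀ b : ℝ, (1.47 : ℝ) < b →
      0 < b ^ 11 - 2 * b ^ 10 + 2 * b ^ 7 - b ^ 4 + 2 * b ^ 3 - 2 * b ^ 2 - 2) ∧
    (∀ x : ℝ, x ^ 11 - 2 * x ^ 10 + 2 * x ^ 7 - x ^ 4 + 2 * x ^ 3 - 2 * x ^ 2 - 2 = 0 →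
      x < (1.47 : ℝ)) := by
  have key : ∀ b : ℝ, (1.47 : ℝ) ≤ b →
      0 < b ^ 11 - 2 * b ^ 10 + 2 * b ^ 7 - b ^ 4 + 2 * b ^ 3 - 2 * b ^ 2 - 2 := by
    intro b hb
    have ht : (0:ℝ) ≤ b - 1.47 := by linarith
    nlinarith [pow_nonneg ht 2, pow_nonneg ht 3, pow_nonneg ht 4, pow_nonneg ht 5,
      pow_nonneg ht 6, pow_nonneg ht 7, pow_nonneg ht 8, pow_nonneg ht 9,
      pow_nonneg ht 10, pow_nonneg ht 11]
  refine ⟨fun b hb => key b hb.le, fun x hx => ?_⟩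
  by_contra h
  push_neg at h
  have := key x h
  linarith
end

section
/- Let (q_n)_{n \ge 2} be a non-decreasing sequence of real numbers with q_2 \ge 2\cdot 2^{1/3}. Then there exists an integer J such that for all j \ge J: q_{j-1} q_j \sqrt{q_{j+1}} (2 - 2 q_j \sqrt{q_{j+1}} + q_j q_{j+1}) > 1/(1 - 1/(q_{j-2} q_{j-1} q_j \sqrt{q_{j+1}})) + (q_{j-1} q_j^2/(q_{j+2}^2 q_{j+3})) \cdot 1/(1 - 1/(\sqrt{q_{j+1}}\, q_{j+2} q_{j+3} q_{j+4})) + q_{j-1} q_j \sqrt{q_{j+1}} (1 - q_j/q_{j+2}). -/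
set_option maxHeartbeats 1000000

lemma poly14 (u : ℝ) (h1 : (1.5873:ℝ) ≤ u) (h2 : u ≤ (2.1214:ℝ)) :
    (-1.706:ℝ) ≤ (u ^ 2 - 0.01) ^ 2 - 2 * u ^ 3 := by
  nlinarith [sq_nonneg (u - 1.5873), sq_nonneg (u - 2.1214),
    mul_nonneg (mul_nonneg (sub_nonneg.mpr h1) (sub_nonneg.mpr h1)) (sub_nonneg.mpr h1),
    mul_nonneg (mul_nonneg (sub_nonneg.mpr h1) (sub_nonneg.mpr h1)) (sub_nonneg.mpr h2),
    sq_nonneg (u * u - 2 * u)]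

lemma coreA14 (x2 x3 x5 s : ℝ) (h2 : (2.5198:ℝ) ≤ x2) (h23 : x2 ≤ x3)
    (h35 : x3 ≤ x5) (hs : (2.12:ℝ) ≤ s) :
    (2.1:ℝ) ≤ x2 * x3 * s * (1 + x3 / x5 + x3 * s ^ 2 - 2 * x3 * s) := by
  have hx3 : (2.5198:ℝ) ≤ x3 := by linarith
  have hx5 : (0:ℝ) < x5 := by linarith
  have hdpos : (0:ℝ) ≤ x3 / x5 := by positivity
  have hss : (0.2544:ℝ) ≤ s * (s - 2) := by nlinarith
  have h1' : (0.6:ℝ) ≤ x3 * s ^ 2 - 2 * x3 * s := by nlinarith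
  have ha1 := mul_le_mul h2 hx3 (by norm_num) (by linarith)
  have hA : (13:ℝ) ≤ x2 * x3 * s := by nlinarith
  nlinarith [mul_le_mul hA (show (1.6:ℝ) ≤ 1 + x3 / x5 + x3 * s ^ 2 - 2 * x3 * s by linarith)
    (by norm_num) (by linarith)]

lemma coreB14 (x2 x3 x5 s u : ℝ) (hul : (1.5873:ℝ) ≤ u) (huu : u ≤ (2.1214:ℝ))
    (hsu : s ≤ u) (hs0 : (0:ℝ) ≤ s) (hs2l : u ^ 2 - 0.01 < s ^ 2)
    (hx2l : u ^ 2 - 0.01 < x2) (hx3l : u ^ 2 - 0.01 < x3) (hx3u : x3 ≤ u ^ 2)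
    (hx5l : u ^ 2 - 0.01 < x5) (hx5u : x5 ≤ u ^ 2) :
    (2.1:ℝ) ≤ x2 * x3 * s * (1 + x3 / x5 + x3 * s ^ 2 - 2 * x3 * s) := by
  have hpos01 : (2.5095:ℝ) ≤ u ^ 2 - 0.01 := by nlinarith
  have hx3 : (0:ℝ) < x3 := by linarith
  have hx5 : (0:ℝ) < x5 := by linarith
  have hd : (u ^ 2 - 0.01) / u ^ 2 ≤ x3 / x5 := div_le_div₀ hx3.le hx3l.le hx5 hx5u
  have hfrac : (0.996:ℝ) ≤ (u ^ 2 - 0.01) / u ^ 2 := by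
    rw [le_div_iff₀ (by positivity)]
    nlinarith
  have hpoly := poly14 u hul huu
  have hprod1 : (u ^ 2 - 0.01) ^ 2 ≤ x3 * s ^ 2 := by nlinarith
  have hprod2 : x3 * s ≤ u ^ 3 := by nlinarith
  have hF : (0.29:ℝ) ≤ 1 + x3 / x5 + x3 * s ^ 2 - 2 * x3 * s := by linarith
  have hsl2 : (1.584:ℝ) ≤ s := by nlinarith [sq_nonneg (s - 1.584)]
  have hx3l2 : (2.5095:ℝ) ≤ x3 := by linarith
  have hx2l2 : (2.5095:ℝ) ≤ x2 := by linarith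
  have hA : (9.9:ℝ) ≤ x2 * x3 * s := by
    have ha1 := mul_le_mul hx2l2 hx3l2 (by norm_num) (by linarith)
    have ha2 := mul_le_mul ha1 hsl2 (by norm_num) (by positivity)
    nlinarith
  have := mul_le_mul hA hF (by norm_num) (by linarith : (0:ℝ) ≤ x2 * x3 * s)
  linarith

set_option maxHeartbeats 1000000 in
lemma key14 (x1 x2 x3 x4 x5 x6 x7 : ℝ)
    (h1 : (2.5198:ℝ) ≤ x1) (h12 : x1 ≤ x2) (h23 : x2 ≤ x3) (h34 : x3 ≤ x4)
    (h45 : x4 ≤ x5) (h56 : x5 ≤ x6) (h67 : x6 ≤ x7)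
    (hc : (4.5:ℝ) ≤ x4 ∨ ∃ a : ℝ, a ≤ 4.5 ∧ x7 ≤ a ∧ a - 0.01 < x1) :
    1 / (1 - 1 / (x1 * x2 * x3 * Real.sqrt x4))
      + (x2 * x3 ^ 2 / (x5 ^ 2 * x6)) * (1 / (1 - 1 / (Real.sqrt x4 * x5 * x6 * x7)))
      + x2 * x3 * Real.sqrt x4 * (1 - x3 / x5)
    < x2 * x3 * Real.sqrt x4 * (2 - 2 * x3 * Real.sqrt x4 + x3 * x4) := by
  have hx1 : (0:ℝ) < x1 := by linarith
  have hx2 : (0:ℝ) < x2 := by linarith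
  have hx3 : (0:ℝ) < x3 := by linarith
  have hx4 : (0:ℝ) < x4 := by linarith
  have hx5 : (0:ℝ) < x5 := by linarith
  have hx6 : (0:ℝ) < x6 := by linarith
  have hx7 : (0:ℝ) < x7 := by linarith
  set s := Real.sqrt x4 with hsdef
  have hs0 : 0 ≤ s := Real.sqrt_nonneg _
  have hs2 : s ^ 2 = x4 := Real.sq_sqrt hx4.le
  have hs : (1.5873:ℝ) ≤ s := by
    rw [hsdef]; exact (Real.le_sqrt' (by norm_num)).mpr (by nlinarith)
  -- core inequality
  have hcore : (2.1:ℝ) ≤ x2 * x3 * s * (1 + x3 / x5 + x3 * x4 - 2 * x3 * s) := by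
    rw [← hs2]
    rcases hc with h44 | ⟨a, ha45, hx7a, hax1⟩
    · have hsl : (2.12:ℝ) ≤ s := by
        rw [hsdef]; exact (Real.le_sqrt' (by norm_num)).mpr (by nlinarith)
      exact coreA14 x2 x3 x5 s (by linarith) h23 (by linarith) hsl
    · have ha0 : (0:ℝ) < a := by linarith
      set u := Real.sqrt a with hudef
      have hu0 : 0 ≤ u := Real.sqrt_nonneg _
      have hu2 : u ^ 2 = a := Real.sq_sqrt ha0.le
      have hau : (2.5198:ℝ) ≤ a := by linarith
      have hul : (1.5873:ℝ) ≤ u := by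
        rw [hudef]; exact (Real.le_sqrt' (by norm_num)).mpr (by nlinarith)
      have huu : u ≤ (2.1214:ℝ) := by
        rw [hudef]
        calc Real.sqrt a ≤ Real.sqrt (2.1214 ^ 2) := Real.sqrt_le_sqrt (by nlinarith)
          _ = 2.1214 := Real.sqrt_sq (by norm_num)
      have hsu : s ≤ u := by
        rw [hudef, hsdef]; exact Real.sqrt_le_sqrt (by linarith)
      exact coreB14 x2 x3 x5 s u hul huu hsu hs0 (by nlinarith) (by nlinarith)
        (by nlinarith) (by nlinarith) (by nlinarith) (by nlinarith)
  -- bound T1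
  have p2 : (6.34:ℝ) ≤ x1 * x2 := by
    have := mul_le_mul h1 (show (2.5198:ℝ) ≤ x2 by linarith) (by norm_num) hx1.le
    nlinarith
  have p3 : (15.9:ℝ) ≤ x1 * x2 * x3 := by
    have := mul_le_mul p2 (show (2.5198:ℝ) ≤ x3 by linarith) (by norm_num) (by linarith)
    nlinarith
  have hD1 : (25:ℝ) ≤ x1 * x2 * x3 * s := by
    have := mul_le_mul p3 hs (by norm_num) (by linarith)
    nlinarith
  have hD1pos : (0:ℝ) < x1 * x2 * x3 * s := by linarith
  have hinv1 : 1 / (x1 * x2 * x3 * s) ≤ 1 / 25 :=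
    one_div_le_one_div_of_le (by norm_num) hD1
  have hinv1pos : (0:ℝ) < 1 / (x1 * x2 * x3 * s) := by positivity
  have hT1 : 1 / (1 - 1 / (x1 * x2 * x3 * s)) ≤ 25 / 24 := by
    have h24 : (24/25:ℝ) ≤ 1 - 1 / (x1 * x2 * x3 * s) := by linarith
    calc 1 / (1 - 1 / (x1 * x2 * x3 * s)) ≤ 1 / (24/25:ℝ) :=
          one_div_le_one_div_of_le (by norm_num) h24
      _ = 25 / 24 := by norm_num
  -- bound T2
  have q2 : (3.9:ℝ) ≤ s * x5 := by
    have := mul_le_mul hs (show (2.5198:ℝ) ≤ x5 by linarith) (by norm_num) hs0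
    nlinarith
  have q3 : (9.8:ℝ) ≤ s * x5 * x6 := by
    have := mul_le_mul q2 (show (2.5198:ℝ) ≤ x6 by linarith) (by norm_num) (by linarith)
    nlinarith
  have hD2 : (25:ℝ) ≤ s * x5 * x6 * x7 := by
    have := mul_le_mul q3 (show (2.5198:ℝ) ≤ x7 by linarith) (by norm_num) (by linarith)
    nlinarith
  have hD2pos : (0:ℝ) < s * x5 * x6 * x7 := by linarith
  have hinv2 : 1 / (s * x5 * x6 * x7) ≤ 1 / 25 :=
    one_div_le_one_div_of_le (by norm_num) hD2
  have hinv2pos : (0:ℝ) < 1 / (s * x5 * x6 * x7) := by positivity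
  have hI2 : 1 / (1 - 1 / (s * x5 * x6 * x7)) ≤ 25 / 24 := by
    have h24 : (24/25:ℝ) ≤ 1 - 1 / (s * x5 * x6 * x7) := by linarith
    calc 1 / (1 - 1 / (s * x5 * x6 * x7)) ≤ 1 / (24/25:ℝ) :=
          one_div_le_one_div_of_le (by norm_num) h24
      _ = 25 / 24 := by norm_num
  have hI2pos : (0:ℝ) ≤ 1 / (1 - 1 / (s * x5 * x6 * x7)) := by
    apply le_of_lt; apply div_pos one_pos; linarith
  have hR : x2 * x3 ^ 2 / (x5 ^ 2 * x6) ≤ 1 := by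
    rw [div_le_one (by positivity)]
    have h35 : x3 ^ 2 ≤ x5 ^ 2 := by nlinarith
    have := mul_le_mul (show x2 ≤ x6 by linarith) h35 (by positivity) (by linarith)
    nlinarith
  have hT2 : (x2 * x3 ^ 2 / (x5 ^ 2 * x6)) * (1 / (1 - 1 / (s * x5 * x6 * x7))) ≤ 25 / 24 := by
    calc (x2 * x3 ^ 2 / (x5 ^ 2 * x6)) * (1 / (1 - 1 / (s * x5 * x6 * x7)))
        ≤ 1 * (25/24) := mul_le_mul hR hI2 hI2pos (by norm_num)
      _ = 25 / 24 := by norm_num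
  -- combine
  have hsplit : x2 * x3 * s * (2 - 2 * x3 * s + x3 * x4)
      = x2 * x3 * s * (1 - x3 / x5) + x2 * x3 * s * (1 + x3 / x5 + x3 * x4 - 2 * x3 * s) := by
    ring
  rw [hsplit]
  have : (25:ℝ)/24 + 25/24 < 2.1 := by norm_num
  linarith

theorem stmt14 (q : ℕ → ℝ)
    (hq2 : 2 * (2 : ℝ) ^ ((1 : ℝ) / 3) ≤ q 2)
    (hmono : ∀ n : ℕ, 2 ≤ n → q n ≤ q (n + 1)) :
    ∃ J : ℕ, ∀ j : ℕ, J ≤ j →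
      1 / (1 - 1 / (q (j - 2) * q (j - 1) * q j * Real.sqrt (q (j + 1))))
        + (q (j - 1) * (q j) ^ 2 / ((q (j + 2)) ^ 2 * q (j + 3))) *
            (1 / (1 - 1 / (Real.sqrt (q (j + 1)) * q (j + 2) * q (j + 3) * q (j + 4))))
        + q (j - 1) * q j * Real.sqrt (q (j + 1)) * (1 - q j / q (j + 2))
      < q (j - 1) * q j * Real.sqrt (q (j + 1)) *
          (2 - 2 * q j * Real.sqrt (q (j + 1)) + q j * q (j + 1)) := by
  -- numeric fact about 2^(1/3)
  have hr3 : ((2:ℝ) ^ ((1:ℝ)/3)) ^ (3:ℕ) = 2 := by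
    rw [← Real.rpow_natCast ((2:ℝ) ^ ((1:ℝ)/3)) 3, ← Real.rpow_mul (by norm_num)]
    norm_num
  have hr0 : (0:ℝ) ≤ (2:ℝ) ^ ((1:ℝ)/3) := Real.rpow_nonneg (by norm_num) _
  have hr : (1.2599:ℝ) ≤ (2:ℝ) ^ ((1:ℝ)/3) := by
    nlinarith [hr3, hr0, sq_nonneg ((2:ℝ) ^ ((1:ℝ)/3) - 1.2599),
      sq_nonneg ((2:ℝ) ^ ((1:ℝ)/3) + 1.2599)]
  have hq2' : (2.5198:ℝ) ≤ q 2 := by linarith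
  -- monotonicity
  have mono2 : ∀ m n : ℕ, 2 ≤ m → m ≤ n → q m ≤ q n := by
    intro m n hm hmn
    induction n, hmn using Nat.le_induction with
    | base => exact le_refl _
    | succ n hn ih => exact le_trans ih (hmono n (le_trans hm hn))
  have hlb : ∀ n : ℕ, 2 ≤ n → (2.5198:ℝ) ≤ q n := fun n hn =>
    le_trans hq2' (mono2 2 n (le_refl _) hn)
  by_cases hbig : ∃ N : ℕ, 2 ≤ N ∧ (4.5:ℝ) ≤ q N
  · obtain ⟨N, hN2, hN45⟩ := hbig
    refine ⟨N + 4, fun j hj => ?_⟩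
    have hj4 : 4 ≤ j := by omega
    apply key14
    · exact hlb (j - 2) (by omega)
    · have := mono2 (j - 2) (j - 1) (by omega) (by omega); exact this
    · exact mono2 (j - 1) j (by omega) (by omega)
    · have := mono2 j (j + 1) (by omega) (by omega); exact this
    · exact mono2 (j + 1) (j + 2) (by omega) (by omega)
    · exact mono2 (j + 2) (j + 3) (by omega) (by omega)
    · exact mono2 (j + 3) (j + 4) (by omega) (by omega)
    · left
      exact le_trans hN45 (mono2 N (j + 1) hN2 (by omega))
  · push_neg at hbig
    have hub : ∀ n : ℕ, 2 ≤ n → q n < 4.5 := fun n hn => hbig n hn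
    have hbdd : BddAbove (Set.range fun n : ℕ => q (n + 2)) := by
      refine ⟨4.5, ?_⟩
      rintro x ⟨n, rfl⟩
      exact (hub (n + 2) (by omega)).le
    set a := ⨆ n : ℕ, q (n + 2) with hadef
    have hle : ∀ n : ℕ, q (n + 2) ≤ a := fun n => le_ciSup hbdd n
    have ha45 : a ≤ 4.5 := ciSup_le fun n => (hub (n + 2) (by omega)).le
    have hex : ∃ m : ℕ, a - 0.01 < q (m + 2) := by
      have h : a - 0.01 < a := by linarith
      obtain ⟨m, hm⟩ := exists_lt_of_lt_ciSup h
      exact ⟨m, hm⟩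
    obtain ⟨m, hm⟩ := hex
    refine ⟨m + 6, fun j hj => ?_⟩
    apply key14
    · exact hlb (j - 2) (by omega)
    · exact mono2 (j - 2) (j - 1) (by omega) (by omega)
    · exact mono2 (j - 1) j (by omega) (by omega)
    · exact mono2 j (j + 1) (by omega) (by omega)
    · exact mono2 (j + 1) (j + 2) (by omega) (by omega)
    · exact mono2 (j + 2) (j + 3) (by omega) (by omega)
    · exact mono2 (j + 3) (j + 4) (by omega) (by omega)
    · right
      refine ⟨a, ha45, ?_, ?_⟩
      · have := hle (j + 2)
        have heq : j + 2 + 2 = j + 4 := by omega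
        rwa [heq] at this
      · calc a - 0.01 < q (m + 2) := hm
          _ ≤ q (j - 2) := mono2 (m + 2) (j - 2) (by omega) (by omega)
end
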